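/- arXiv:2503.24161 — 6 statements merged into one kernel-verified Lean document; each statement's English description precedes it below -/
import Mathlib

section
/- Let 𝔤 = V₁ ⊕ ⋯ ⊕ V_s be a stratified real Lie algebra of rank m and let k ≥ 0 be an integer. Then 𝔤 is hypergenerated of order k if and only if every linear subspace P ⊆ V₁ with dim P = m − k satisfies V₂ ⊆ Lie(P). -/
/-!
`V₂ = [V₁, V₁] ⊆ [𝔤, 𝔤]` gives one direction. Conversely, if `V₂ ⊆ Lie(P)` with `P ⊆ V₁`, then
for `x ∈ V₁` the derivation `ad x` maps `P` into `V₂ ⊆ Lie(P)`, hence preserves `Lie(P)`. By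
induction every layer `V_{j+1} = [V₁, V_j]`, `j ≥ 1`, lies in `Lie(P)`, so `𝔤 = V₁ + Lie(P)`, and
expanding a bracket `[a + u, b + v]` shows `[𝔤, 𝔤] ⊆ Lie(P)`.
-/

/-- The submodule of a Lie algebra spanned by brackets of elements of two submodules. -/
def bracketSpan {L : Type*} [LieRing L] [LieAlgebra ℝ L] (A B : Submodule ℝ L) :
    Submodule ℝ L :=
  Submodule.span ℝ {z | ∃ x ∈ A, ∃ y ∈ B, ⁅x, y⁆ = z}

/-- The commutator submodule `[𝔤, 𝔤]` of a Lie algebra. -/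
def commutatorSubmodule (L : Type*) [LieRing L] [LieAlgebra ℝ L] : Submodule ℝ L :=
  bracketSpan (⊤ : Submodule ℝ L) ⊤

/-- A family `V` of submodules of a real Lie algebra `L` is a stratification of step `s` if
`L = V 1 ⊕ ⋯ ⊕ V s`, `[V 1, V (i-1)] = V i` for `2 ≤ i ≤ s`, `V s ≠ 0` and `[V 1, V s] = 0`.
We also require `V i = 0` for `i = 0` and `i > s`. -/
structure IsStratification (L : Type*) [LieRing L] [LieAlgebra ℝ L]
    (V : ℕ → Submodule ℝ L) (s : ℕ) : Prop where
  one_le_step : 1 ≤ s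
  isInternal : DirectSum.IsInternal (fun i : Fin s => V (i.1 + 1))
  bracket_eq : ∀ i, 2 ≤ i → i ≤ s → bracketSpan (V 1) (V (i - 1)) = V i
  last_ne_bot : V s ≠ ⊥
  bracket_last_eq_bot : bracketSpan (V 1) (V s) = ⊥
  zero_eq_bot : V 0 = ⊥
  eq_bot_of_gt : ∀ i, s < i → V i = ⊥

/-- A stratified real Lie algebra with strata `V` and rank `m = dim (V 1)` is hypergenerated of
order `k` if every subspace `P ⊆ V 1` with `dim P = m - k` satisfies `[𝔤,𝔤] ⊆ Lie(P)`. -/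
def IsHypergenerated (L : Type*) [LieRing L] [LieAlgebra ℝ L]
    (V : ℕ → Submodule ℝ L) (k : ℕ) : Prop :=
  ∀ P : Submodule ℝ L, P ≤ V 1 →
    Module.finrank ℝ P = Module.finrank ℝ (V 1) - k →
    commutatorSubmodule L ≤ (LieSubalgebra.lieSpan ℝ L (P : Set L)).toSubmodule

/-- `{y ∈ Lie(s) | [x, y] ∈ Lie(s)}` is a subalgebra because `ad x` is a derivation. -/
theorem LieSubalgebra.lie_mem_lieSpan_of_forall_mem {R L : Type*} [CommRing R] [LieRing L]
    [LieAlgebra R L] {s : Set L} {x : L} (hx : ∀ p ∈ s, ⁅x, p⁆ ∈ lieSpan R L s) {y : L}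
    (hy : y ∈ lieSpan R L s) : ⁅x, y⁆ ∈ lieSpan R L s := by
  let A := lieSpan R L s
  let B : LieSubalgebra R L :=
    { carrier := {y | y ∈ A ∧ ⁅x, y⁆ ∈ A}
      zero_mem' := ⟨A.zero_mem, by simp⟩
      add_mem' := fun ha hb => ⟨A.add_mem ha.1 hb.1, by rw [lie_add]; exact A.add_mem ha.2 hb.2⟩
      smul_mem' := fun c _ ha => ⟨A.smul_mem c ha.1, by rw [lie_smul]; exact A.smul_mem c ha.2⟩
      lie_mem' := fun ha hb => ⟨A.lie_mem ha.1 hb.1, by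
        rw [leibniz_lie]; exact A.add_mem (A.lie_mem ha.2 hb.1) (A.lie_mem ha.1 hb.2)⟩ }
  have hAB : A ≤ B := lieSpan_le.mpr fun p hp => ⟨subset_lieSpan hp, hx p hp⟩
  exact (hAB hy).2

section BracketSpan

variable {L : Type*} [LieRing L] [LieAlgebra ℝ L]

theorem lie_mem_bracketSpan {A B : Submodule ℝ L} {x y : L} (hx : x ∈ A) (hy : y ∈ B) :
    ⁅x, y⁆ ∈ bracketSpan A B :=
  Submodule.subset_span ⟨x, hx, y, hy, rfl⟩

theorem bracketSpan_le {A B C : Submodule ℝ L} (h : ∀ x ∈ A, ∀ y ∈ B, ⁅x, y⁆ ∈ C) :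
    bracketSpan A B ≤ C :=
  Submodule.span_le.mpr fun _ ⟨x, hx, y, hy, hz⟩ => hz ▸ h x hx y hy

theorem bracketSpan_mono {A A' B B' : Submodule ℝ L} (hA : A ≤ A') (hB : B ≤ B') :
    bracketSpan A B ≤ bracketSpan A' B' :=
  bracketSpan_le fun _ hx _ hy => lie_mem_bracketSpan (hA hx) (hB hy)

theorem commutatorSubmodule_le_of_sup_eq_top {U : Submodule ℝ L} {A : LieSubalgebra ℝ L}
    (hUA : U ⊔ A.toSubmodule = ⊤) (hUU : bracketSpan U U ≤ A.toSubmodule)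
    (hU : ∀ x ∈ U, ∀ y ∈ A, ⁅x, y⁆ ∈ A) : commutatorSubmodule L ≤ A.toSubmodule := by
  refine bracketSpan_le fun x hx y hy => ?_
  obtain ⟨a, ha, u, hu, rfl⟩ := Submodule.mem_sup.mp (hUA ▸ hx)
  obtain ⟨b, hb, v, hv, rfl⟩ := Submodule.mem_sup.mp (hUA ▸ hy)
  have hub : ⁅u, b⁆ ∈ A := by rw [← lie_skew]; exact A.neg_mem (hU b hb u hu)
  rw [add_lie, lie_add, lie_add]
  exact A.add_mem (A.add_mem (hUU (lie_mem_bracketSpan ha hb)) (hU a ha v hv))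
    (A.add_mem hub (A.lie_mem hu hv))

end BracketSpan

namespace IsStratification

variable {L : Type*} [LieRing L] [LieAlgebra ℝ L] {V : ℕ → Submodule ℝ L} {s : ℕ}

theorem le_bracketSpan_one (hst : IsStratification L V s) {i : ℕ} (hi : 2 ≤ i) :
    V i ≤ bracketSpan (V 1) (V (i - 1)) := by
  rcases le_or_gt i s with his | hsi
  · exact (hst.bracket_eq i hi his).ge
  · rw [hst.eq_bot_of_gt i hsi]
    exact bot_le

theorem bracketSpan_one_one_le (hst : IsStratification L V s) :
    bracketSpan (V 1) (V 1) ≤ V 2 := by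
  rcases hst.one_le_step.eq_or_lt with rfl | hs
  · rw [hst.bracket_last_eq_bot]
    exact bot_le
  · exact (hst.bracket_eq 2 le_rfl hs).le

theorem second_le_commutatorSubmodule (hst : IsStratification L V s) :
    V 2 ≤ commutatorSubmodule L :=
  (hst.le_bracketSpan_one le_rfl).trans (bracketSpan_mono le_top le_top)

theorem commutatorSubmodule_le_of_second_le (hst : IsStratification L V s)
    {A : LieSubalgebra ℝ L} (h2 : V 2 ≤ A.toSubmodule) (h1 : ∀ x ∈ V 1, ∀ y ∈ A, ⁅x, y⁆ ∈ A) :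
    commutatorSubmodule L ≤ A.toSubmodule := by
  have hlayer : ∀ j, V (j + 2) ≤ A.toSubmodule := by
    intro j
    induction j with
    | zero => exact h2
    | succ j ih =>
      exact (hst.le_bracketSpan_one (by omega)).trans
        (bracketSpan_le fun x hx y hy => h1 x hx y (ih hy))
  have htop : V 1 ⊔ A.toSubmodule = ⊤ := by
    refine top_le_iff.mp (hst.isInternal.submodule_iSup_eq_top.ge.trans (iSup_le fun i => ?_))
    rcases i with ⟨_ | j, _⟩
    · exact le_sup_left
    · exact (hlayer j).trans le_sup_right
  exact commutatorSubmodule_le_of_sup_eq_top htop (hst.bracketSpan_one_one_le.trans h2) h1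

theorem commutatorSubmodule_le_lieSpan (hst : IsStratification L V s) {P : Submodule ℝ L}
    (hP : P ≤ V 1) (h2 : V 2 ≤ (LieSubalgebra.lieSpan ℝ L (P : Set L)).toSubmodule) :
    commutatorSubmodule L ≤ (LieSubalgebra.lieSpan ℝ L (P : Set L)).toSubmodule :=
  hst.commutatorSubmodule_le_of_second_le h2 fun _ hx _ hy =>
    LieSubalgebra.lie_mem_lieSpan_of_forall_mem
      (fun _ hp => h2 (hst.bracketSpan_one_one_le (lie_mem_bracketSpan hx (hP hp)))) hy

end IsStratification

theorem hypergenerated_iff_second_layer_general {L : Type*} [LieRing L] [LieAlgebra ℝ L]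
    (V : ℕ → Submodule ℝ L) (s m : ℕ)
    (hst : IsStratification L V s) (hm : Module.finrank ℝ (V 1) = m) (k : ℕ) :
    IsHypergenerated L V k ↔
      ∀ P : Submodule ℝ L, P ≤ V 1 → Module.finrank ℝ P = m - k →
        V 2 ≤ (LieSubalgebra.lieSpan ℝ L (P : Set L)).toSubmodule := by
  subst hm
  constructor
  · intro H P hP hdim
    exact hst.second_le_commutatorSubmodule.trans (H P hP hdim)
  · intro H P hP hdim
    exact hst.commutatorSubmodule_le_lieSpan hP (H P hP hdim)

/-- A stratified real Lie algebra `𝔤 = V₁ ⊕ ⋯ ⊕ V_s` of rank `m` is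
hypergenerated of order `k` if and only if every linear subspace `P ⊆ V₁` with
`dim P = m - k` satisfies `V₂ ⊆ Lie(P)`. -/
theorem hypergenerated_iff_second_layer {L : Type*} [LieRing L] [LieAlgebra ℝ L]
    [FiniteDimensional ℝ L] (V : ℕ → Submodule ℝ L) (s m : ℕ)
    (hst : IsStratification L V s) (hm : Module.finrank ℝ (V 1) = m) (k : ℕ) :
    IsHypergenerated L V k ↔
      ∀ P : Submodule ℝ L, P ≤ V 1 → Module.finrank ℝ P = m - k →
        V 2 ≤ (LieSubalgebra.lieSpan ℝ L (P : Set L)).toSubmodule :=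
  hypergenerated_iff_second_layer_general V s m hst hm k
end

section
/- Let 𝔤 = V₁ ⊕ V₂ be a stratified real Lie algebra of step 2 and let k ≥ 0 be an integer. Then 𝔤 is hypergenerated of order k if and only if 2k < order(𝔤), where order(𝔤) is the Métivier order of 𝔤. -/
/-- The Lie bracket as a bilinear map `V₁ → V₁ → V₂`, given that brackets of elements
of `V₁` lie in `V₂`. -/
noncomputable def bracketBilin {L : Type*} [LieRing L] [LieAlgebra ℝ L]
    (V₁ V₂ : Submodule ℝ L) (h : ∀ v ∈ V₁, ∀ w ∈ V₁, ⁅v, w⁆ ∈ V₂) :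
    V₁ →ₗ[ℝ] V₁ →ₗ[ℝ] V₂ :=
  LinearMap.mk₂ ℝ (fun v w => ⟨⁅(v : L), (w : L)⁆, h v v.2 w w.2⟩)
    (fun x y z => Subtype.ext (by simp [add_lie]))
    (fun c x y => Subtype.ext (by simp))
    (fun x y z => Subtype.ext (by simp [lie_add]))
    (fun c x y => Subtype.ext (by simp))

/-- The Kaplan operator: to a functional `μ` on `V₂` it associates the alternating
bilinear form `(v, w) ↦ μ ⁅v, w⁆` on `V₁`. -/
noncomputable def kaplan {L : Type*} [LieRing L] [LieAlgebra ℝ L]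
    (V₁ V₂ : Submodule ℝ L) (h : ∀ v ∈ V₁, ∀ w ∈ V₁, ⁅v, w⁆ ∈ V₂)
    (μ : Module.Dual ℝ V₂) : LinearMap.BilinForm ℝ V₁ :=
  (bracketBilin V₁ V₂ h).compr₂ μ

/-- The rank of a bilinear form: `dim V - dim ker ω`. -/
noncomputable def formRank {V : Type*} [AddCommGroup V] [Module ℝ V]
    (ω : LinearMap.BilinForm ℝ V) : ℕ :=
  Module.finrank ℝ V - Module.finrank ℝ (LinearMap.ker ω)

/-- The Métivier order of a step-2 stratified Lie algebra: the minimum of the ranks of the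
Kaplan forms `J_μ` over nonzero functionals `μ` on `V₂`. -/
noncomputable def metivierOrder {L : Type*} [LieRing L] [LieAlgebra ℝ L]
    (V₁ V₂ : Submodule ℝ L) (h : ∀ v ∈ V₁, ∀ w ∈ V₁, ⁅v, w⁆ ∈ V₂) : ℕ :=
  sInf {r : ℕ | ∃ μ : Module.Dual ℝ V₂, μ ≠ 0 ∧ r = formRank (kaplan V₁ V₂ h μ)}

theorem IsStratification.lie_mem_sq {L : Type*} [LieRing L] [LieAlgebra ℝ L]
    {V : ℕ → Submodule ℝ L} {s : ℕ} (hst : IsStratification L V s) (hs : 2 ≤ s) :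
    ∀ v ∈ V 1, ∀ w ∈ V 1, ⁅v, w⁆ ∈ V 2 := by
  intro v hv w hw
  have h2 : bracketSpan (V 1) (V 1) = V 2 := hst.bracket_eq 2 le_rfl hs
  rw [← h2]
  exact Submodule.subset_span ⟨v, hv, w, hw, rfl⟩

open Module Submodule

namespace LinearMap.BilinForm

variable {K E : Type*} [Field K] [AddCommGroup E] [Module K E]
  {ω : LinearMap.BilinForm K E} {P : Submodule K E}

theorem ker_le_orthogonal (hω : ω.IsAlt) :
    LinearMap.ker ω ≤ ω.orthogonal P := fun v hv p _ => by
  rw [← LinearMap.IsAlt.neg hω v p, LinearMap.mem_ker.mp hv, LinearMap.zero_apply, neg_zero]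

theorem sup_span_singleton_le_orthogonal (hω : ω.IsAlt) (hP : P ≤ ω.orthogonal P) {v : E}
    (hv : v ∈ ω.orthogonal P) :
    P ⊔ span K {v} ≤ ω.orthogonal (P ⊔ span K {v}) := by
  rintro _ hx _ hy
  obtain ⟨p, hp, _, hav, rfl⟩ := mem_sup.mp hy
  obtain ⟨q, hq, _, hbv, rfl⟩ := mem_sup.mp hx
  obtain ⟨a, rfl⟩ := mem_span_singleton.mp hav
  obtain ⟨b, rfl⟩ := mem_span_singleton.mp hbv
  have hvq : ω v q = 0 := by rw [← LinearMap.IsAlt.neg hω, hv q hq, neg_zero]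
  simp [hP hq p hp, hv p hp, hvq, LinearMap.IsAlt.self_eq_zero hω]

variable [FiniteDimensional K E]

theorem two_mul_finrank_le_of_le_orthogonal (hP : P ≤ ω.orthogonal P) :
    2 * finrank K P ≤ finrank K E + finrank K (LinearMap.ker ω) := by
  have hsum := finrank_add_finrank_orthogonal' (B := ω) P
  have hP' := Submodule.finrank_mono hP
  have hker := Submodule.finrank_mono (inf_le_right : P ⊓ LinearMap.ker ω ≤ _)
  omega

theorem exists_mem_orthogonal_notMem (hω : ω.IsAlt)
    (hdim : 2 * finrank K P < finrank K E + finrank K (LinearMap.ker ω)) :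
    ∃ v ∈ ω.orthogonal P, v ∉ P := by
  by_cases hker : LinearMap.ker ω ≤ P
  · refine SetLike.not_le_iff_exists.mp fun hle => ?_
    have hsum := finrank_add_finrank_orthogonal' (B := ω) P
    rw [inf_eq_right.mpr hker] at hsum
    have := Submodule.finrank_mono hle
    omega
  · obtain ⟨v, hv, hvP⟩ := SetLike.not_le_iff_exists.mp hker
    exact ⟨v, ker_le_orthogonal hω hv, hvP⟩

theorem exists_finrank_eq_le_orthogonal (hω : ω.IsAlt) {j : ℕ}
    (hj : 2 * j ≤ finrank K E + finrank K (LinearMap.ker ω)) :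
    ∃ P : Submodule K E, finrank K P = j ∧ P ≤ ω.orthogonal P := by
  induction j with
  | zero => exact ⟨⊥, finrank_bot K E, bot_le⟩
  | succ j ih =>
    obtain ⟨P, rfl, hP⟩ := ih (by omega)
    obtain ⟨v, hv, hvP⟩ := exists_mem_orthogonal_notMem hω (P := P) (by omega)
    exact ⟨P ⊔ span K {v}, finrank_sup_span_singleton hvP,
      sup_span_singleton_le_orthogonal hω hP hv⟩

end LinearMap.BilinForm

theorem LinearMap.BilinForm.IsAlt.two_mul_lt_formRank_iff {E : Type*} [AddCommGroup E] [Module ℝ E]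
    [FiniteDimensional ℝ E] {ω : LinearMap.BilinForm ℝ E} (hω : ω.IsAlt) (k : ℕ) :
    2 * k < formRank ω ↔
      ∀ Q : Submodule ℝ E, finrank ℝ Q = finrank ℝ E - k → ¬ Q ≤ ω.orthogonal Q := by
  have hker := Submodule.finrank_le (LinearMap.ker ω)
  unfold formRank
  refine ⟨fun hk Q hQ hQω => ?_, fun H => ?_⟩
  · have := LinearMap.BilinForm.two_mul_finrank_le_of_le_orthogonal hQω
    omega
  · by_contra hk
    obtain ⟨Q, hQ, hQω⟩ :=
      LinearMap.BilinForm.exists_finrank_eq_le_orthogonal hω (j := finrank ℝ E - k) (by omega)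
    exact H Q hQ hQω

section LieAlgebra

variable {L : Type*} [LieRing L] [LieAlgebra ℝ L]

section Kaplan

variable (V₁ V₂ : Submodule ℝ L) (h : ∀ v ∈ V₁, ∀ w ∈ V₁, ⁅v, w⁆ ∈ V₂)

theorem kaplan_apply (μ : Module.Dual ℝ V₂) (x y : V₁) :
    kaplan V₁ V₂ h μ x y = μ ⟨⁅(x : L), (y : L)⁆, h x x.2 y y.2⟩ :=
  rfl

theorem kaplan_isAlt (μ : Module.Dual ℝ V₂) : (kaplan V₁ V₂ h μ).IsAlt := fun x => by
  rw [kaplan_apply, ← μ.map_zero]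
  congr 1
  exact Subtype.ext (lie_self _)

theorem mem_dualAnnihilator_comap_bracketSpan_iff (Q : Submodule ℝ V₁) (μ : Module.Dual ℝ V₂) :
    μ ∈ ((bracketSpan (Q.map V₁.subtype) (Q.map V₁.subtype)).comap V₂.subtype).dualAnnihilator ↔
      Q ≤ (kaplan V₁ V₂ h μ).orthogonal Q := by
  rw [Submodule.mem_dualAnnihilator]
  constructor
  · intro hμ y hy x hx
    exact hμ _ (Submodule.subset_span ⟨x, ⟨x, hx, rfl⟩, y, ⟨y, hy, rfl⟩, rfl⟩)
  · intro hQ w hw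
    have hle : bracketSpan (Q.map V₁.subtype) (Q.map V₁.subtype) ≤
        (LinearMap.ker μ).map V₂.subtype := by
      refine Submodule.span_le.mpr ?_
      rintro _ ⟨_, ⟨x, hx, rfl⟩, _, ⟨y, hy, rfl⟩, rfl⟩
      exact ⟨_, hQ hy x hx, rfl⟩
    obtain ⟨w', hw', hw'w⟩ := hle hw
    rwa [← Subtype.ext hw'w]

theorem le_bracketSpan_map_iff (Q : Submodule ℝ V₁) :
    V₂ ≤ bracketSpan (Q.map V₁.subtype) (Q.map V₁.subtype) ↔
      ∀ μ : Module.Dual ℝ V₂, Q ≤ (kaplan V₁ V₂ h μ).orthogonal Q → μ = 0 := by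
  simp_rw [← mem_dualAnnihilator_comap_bracketSpan_iff V₁ V₂ h, ← Submodule.eq_bot_iff,
    Submodule.dualAnnihilator_eq_bot_iff, Submodule.comap_subtype_eq_top]

end Kaplan

theorem lt_metivierOrder_iff (V₁ V₂ : Submodule ℝ L) (h : ∀ v ∈ V₁, ∀ w ∈ V₁, ⁅v, w⁆ ∈ V₂)
    (hV₂ : V₂ ≠ ⊥) (r : ℕ) :
    r < metivierOrder V₁ V₂ h ↔
      ∀ μ : Module.Dual ℝ V₂, μ ≠ 0 → r < formRank (kaplan V₁ V₂ h μ) := by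
  obtain ⟨x, hx, hx0⟩ := exists_mem_ne_zero_of_ne_bot hV₂
  obtain ⟨μ, hμ⟩ := Projective.exists_dual_ne_zero ℝ (x := (⟨x, hx⟩ : V₂)) (by simpa using hx0)
  have hne : {r | ∃ μ : Dual ℝ V₂, μ ≠ 0 ∧ r = formRank (kaplan V₁ V₂ h μ)}.Nonempty :=
    ⟨_, μ, fun hμ0 => hμ (by simp [hμ0]), rfl⟩
  refine ⟨fun hr μ hμ => hr.trans_le (Nat.sInf_le ⟨μ, hμ, rfl⟩), fun H => ?_⟩
  obtain ⟨μ, hμ, hr⟩ := Nat.sInf_mem hne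
  rw [metivierOrder, hr]
  exact H μ hμ

namespace IsStratification

variable {V : ℕ → Submodule ℝ L}

theorem one_sup_two_eq_top (hst : IsStratification L V 2) : V 1 ⊔ V 2 = ⊤ := by
  rw [← hst.isInternal.submodule_iSup_eq_top]
  exact le_antisymm (sup_le (le_iSup_of_le 0 le_rfl) (le_iSup_of_le 1 le_rfl))
    (iSup_le fun i => by fin_cases i <;> simp)

theorem disjoint_one_two (hst : IsStratification L V 2) : Disjoint (V 1) (V 2) :=
  hst.isInternal.submodule_iSupIndep.pairwiseDisjoint (show (0 : Fin 2) ≠ 1 by decide)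

theorem lie_eq_zero_of_mem_two (hst : IsStratification L V 2) {u : L} (hu : u ∈ V 2) (z : L) :
    ⁅u, z⁆ = 0 := by
  have hV₁ : ∀ x ∈ V 1, ⁅u, x⁆ = 0 := fun x hx => by
    have hxu : ⁅x, u⁆ ∈ bracketSpan (V 1) (V 2) := Submodule.subset_span ⟨x, hx, u, hu, rfl⟩
    rw [hst.bracket_last_eq_bot, Submodule.mem_bot] at hxu
    rw [← lie_skew, hxu, neg_zero]
  have hV₂ : V 2 ≤ LinearMap.ker (LieAlgebra.ad ℝ L u) := by
    rw [← hst.bracket_eq 2 le_rfl le_rfl, bracketSpan, Submodule.span_le]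
    rintro _ ⟨x, hx, y, hy, rfl⟩
    simp [leibniz_lie, hV₁ x hx, hV₁ y hy]
  have hz : z ∈ V 1 ⊔ V 2 := hst.one_sup_two_eq_top ▸ Submodule.mem_top
  obtain ⟨x, hx, w, hw, rfl⟩ := Submodule.mem_sup.mp hz
  rw [lie_add, hV₁ x hx, zero_add]
  exact hV₂ hw

theorem lie_add_add_of_mem_two (hst : IsStratification L V 2) {u w : L} (hu : u ∈ V 2)
    (hw : w ∈ V 2) (a b : L) : ⁅a + u, b + w⁆ = ⁅a, b⁆ := by
  have haw : ⁅a, w⁆ = 0 := by rw [← lie_skew, hst.lie_eq_zero_of_mem_two hw, neg_zero]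
  simp [add_lie, lie_add, haw, hst.lie_eq_zero_of_mem_two hu]

theorem commutatorSubmodule_eq (hst : IsStratification L V 2) : commutatorSubmodule L = V 2 := by
  refine le_antisymm (Submodule.span_le.mpr ?_) ?_
  · rintro _ ⟨x, -, y, -, rfl⟩
    have hx : x ∈ V 1 ⊔ V 2 := hst.one_sup_two_eq_top ▸ Submodule.mem_top
    have hy : y ∈ V 1 ⊔ V 2 := hst.one_sup_two_eq_top ▸ Submodule.mem_top
    obtain ⟨a, ha, u, hu, rfl⟩ := Submodule.mem_sup.mp hx
    obtain ⟨b, hb, w, hw, rfl⟩ := Submodule.mem_sup.mp hy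
    rw [hst.lie_add_add_of_mem_two hu hw]
    exact hst.lie_mem_sq le_rfl a ha b hb
  · rw [← hst.bracket_eq 2 le_rfl le_rfl]
    exact Submodule.span_mono fun _ ⟨x, _, y, _, hxy⟩ => ⟨x, trivial, y, trivial, hxy⟩

theorem bracketSpan_le_two (hst : IsStratification L V 2) {P : Submodule ℝ L} (hP : P ≤ V 1) :
    bracketSpan P P ≤ V 2 :=
  span_le.mpr fun _ ⟨x, hx, y, hy, hxy⟩ => hxy ▸ hst.lie_mem_sq le_rfl x (hP hx) y (hP hy)

theorem lieSpan_eq_sup_bracketSpan (hst : IsStratification L V 2) {P : Submodule ℝ L}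
    (hP : P ≤ V 1) :
    (LieSubalgebra.lieSpan ℝ L (P : Set L)).toSubmodule = P ⊔ bracketSpan P P := by
  refine le_antisymm ?_ (sup_le (fun x hx => LieSubalgebra.subset_lieSpan hx) ?_)
  · let A : LieSubalgebra ℝ L :=
      { toSubmodule := P ⊔ bracketSpan P P
        lie_mem' := fun {x y} hx hy => by
          obtain ⟨p, hp, u, hu, rfl⟩ := Submodule.mem_sup.mp hx
          obtain ⟨q, hq, w, hw, rfl⟩ := Submodule.mem_sup.mp hy
          rw [hst.lie_add_add_of_mem_two (hst.bracketSpan_le_two hP hu)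
            (hst.bracketSpan_le_two hP hw)]
          exact Submodule.mem_sup_right (Submodule.subset_span ⟨p, hp, q, hq, rfl⟩) }
    exact LieSubalgebra.lieSpan_le (K := A).mpr fun x hx => Submodule.mem_sup_left hx
  · refine Submodule.span_le.mpr ?_
    rintro _ ⟨x, hx, y, hy, rfl⟩
    exact LieSubalgebra.lie_mem _ (LieSubalgebra.subset_lieSpan hx)
      (LieSubalgebra.subset_lieSpan hy)

theorem commutatorSubmodule_le_lieSpan_iff (hst : IsStratification L V 2) {P : Submodule ℝ L}
    (hP : P ≤ V 1) :
    commutatorSubmodule L ≤ (LieSubalgebra.lieSpan ℝ L (P : Set L)).toSubmodule ↔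
      V 2 ≤ bracketSpan P P := by
  rw [hst.commutatorSubmodule_eq, hst.lieSpan_eq_sup_bracketSpan hP]
  refine ⟨fun h => ?_, fun h => le_sup_of_le_right h⟩
  have hdisj : P ⊓ V 2 = ⊥ := disjoint_iff.mp (hst.disjoint_one_two.mono_left hP)
  calc V 2 ≤ (bracketSpan P P ⊔ P) ⊓ V 2 := le_inf (sup_comm P _ ▸ h) le_rfl
    _ = bracketSpan P P := by
      rw [sup_inf_assoc_of_le P (hst.bracketSpan_le_two hP), hdisj, sup_bot_eq]

theorem isHypergenerated_iff (hst : IsStratification L V 2) (k : ℕ) :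
    IsHypergenerated L V k ↔ ∀ Q : Submodule ℝ (V 1), finrank ℝ Q = finrank ℝ (V 1) - k →
      V 2 ≤ bracketSpan (Q.map (V 1).subtype) (Q.map (V 1).subtype) := by
  refine ⟨fun H Q hQ => ?_, fun H P hP hPk => ?_⟩
  · rw [← hst.commutatorSubmodule_le_lieSpan_iff (Submodule.map_subtype_le _ Q)]
    exact H _ (Submodule.map_subtype_le _ Q) ((Submodule.finrank_map_subtype_eq _ Q).trans hQ)
  · have := H (P.comap (V 1).subtype) ((Submodule.comapSubtypeEquivOfLe hP).finrank_eq.trans hPk)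
    rw [Submodule.map_comap_subtype, inf_eq_right.mpr hP] at this
    exact (hst.commutatorSubmodule_le_lieSpan_iff hP).mpr this

end IsStratification

end LieAlgebra

/-- A stratified real Lie algebra `𝔤 = V₁ ⊕ V₂` of step 2 is hypergenerated
of order `k` if and only if `2k < order(𝔤)`, the Métivier order of `𝔤`. -/
theorem isHypergenerated_iff_lt_metivierOrder {L : Type*} [LieRing L] [LieAlgebra ℝ L]
    [FiniteDimensional ℝ L] (V : ℕ → Submodule ℝ L) (hst : IsStratification L V 2) (k : ℕ) :
    IsHypergenerated L V k ↔ 2 * k < metivierOrder (V 1) (V 2) (hst.lie_mem_sq le_rfl) := by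
  have hbr := hst.lie_mem_sq le_rfl
  rw [hst.isHypergenerated_iff, lt_metivierOrder_iff _ _ _ hst.last_ne_bot]
  constructor
  · intro H μ hμ
    refine ((kaplan_isAlt _ _ hbr μ).two_mul_lt_formRank_iff k).mpr fun Q hQ hQμ => hμ ?_
    exact (le_bracketSpan_map_iff _ _ hbr Q).mp (H Q hQ) μ hQμ
  · intro H Q hQ
    refine (le_bracketSpan_map_iff _ _ hbr Q).mpr fun μ hQμ => by_contra fun hμ => ?_
    exact ((kaplan_isAlt _ _ hbr μ).two_mul_lt_formRank_iff k).mp (H μ hμ) Q hQ hQμ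
end

section
/- Let 𝔤 = V₁ ⊕ ⋯ ⊕ V_s be a stratified real Lie algebra of step s ≥ 2 and rank m, and suppose 𝔤 is hypergenerated of order k. Then m ≥ 2(k+1). -/
open Module

section Isotropic

variable {K E : Type*} [Field K] [AddCommGroup E] [Module K E] [FiniteDimensional K E]

theorem Submodule.finrank_le_finrank_inf_ker_add_one (U : Submodule K E) (f : Dual K E) :
    finrank K U ≤ finrank K ↥(U ⊓ LinearMap.ker f) + 1 := by
  have hsum := Submodule.finrank_sup_add_finrank_inf_eq U (LinearMap.ker f)
  have hrank := f.finrank_range_add_finrank_ker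
  have hrange : finrank K (LinearMap.range f) ≤ 1 := by
    simpa using Submodule.finrank_le (LinearMap.range f)
  have hsup := Submodule.finrank_le (U ⊔ LinearMap.ker f)
  omega

theorem LinearMap.IsAlt.exists_isotropic_submodule {B : E →ₗ[K] E →ₗ[K] K} (hB : B.IsAlt)
    (d : ℕ) (U : Submodule K E) (hd : 2 * d ≤ finrank K U + 1) :
    ∃ P ≤ U, finrank K P = d ∧ ∀ x ∈ P, ∀ y ∈ P, B x y = 0 := by
  induction d generalizing U with
  | zero => exact ⟨⊥, bot_le, finrank_bot K E, by simp⟩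
  | succ d ih =>
    obtain ⟨v, hvU, hv⟩ := Submodule.exists_mem_ne_zero_of_ne_bot <|
      Submodule.one_le_finrank_iff.1 (by omega : 1 ≤ finrank K U)
    obtain ⟨g, hgv⟩ := Projective.exists_dual_ne_zero K hv
    -- Cutting by `ker g` keeps `v` out of the smaller isotropic subspace.
    have hW : finrank K U ≤ finrank K ↥(U ⊓ LinearMap.ker (B v) ⊓ LinearMap.ker g) + 2 := by
      have := U.finrank_le_finrank_inf_ker_add_one (B v)
      have := (U ⊓ LinearMap.ker (B v)).finrank_le_finrank_inf_ker_add_one g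
      omega
    obtain ⟨P, hPW, hP, hPiso⟩ := ih (U ⊓ LinearMap.ker (B v) ⊓ LinearMap.ker g) (by omega)
    have hvP : v ∉ P := fun h ↦ hgv (hPW h).2
    have hBvP : ∀ a ∈ P, B v a = 0 := fun a ha ↦ (hPW ha).1.2
    refine ⟨P ⊔ Submodule.span K {v},
      sup_le (hPW.trans (inf_le_left.trans inf_le_left))
        ((Submodule.span_singleton_le_iff_mem v U).2 hvU),
      by rw [Submodule.finrank_sup_span_singleton hvP, hP], ?_⟩
    intro x hx y hy
    obtain ⟨a, ha, _, hb, rfl⟩ := Submodule.mem_sup.1 hx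
    obtain ⟨a', ha', _, hb', rfl⟩ := Submodule.mem_sup.1 hy
    obtain ⟨c, rfl⟩ := Submodule.mem_span_singleton.1 hb
    obtain ⟨c', rfl⟩ := Submodule.mem_span_singleton.1 hb'
    simp [hPiso a ha a' ha', hBvP a' ha', hB.isRefl _ _ (hBvP a ha), hB.self_eq_zero]

end Isotropic

namespace IsStratification

variable {L : Type*} [LieRing L] [LieAlgebra ℝ L] {V : ℕ → Submodule ℝ L} {s : ℕ}

theorem eq_bot_of_notMem_Icc (hV : IsStratification L V s) {i : ℕ} (hi : i ∉ Set.Icc 1 s) :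
    V i = ⊥ := by
  rcases Nat.eq_zero_or_pos i with rfl | hi0
  · exact hV.zero_eq_bot
  · exact hV.eq_bot_of_gt i (by rw [Set.mem_Icc] at hi; omega)

theorem eq_zero_of_mem_of_notMem_Icc (hV : IsStratification L V s) {i : ℕ}
    (hi : i ∉ Set.Icc 1 s) {x : L} (hx : x ∈ V i) : x = 0 := by
  rwa [hV.eq_bot_of_notMem_Icc hi, Submodule.mem_bot] at hx

theorem lie_mem_of_mem_one (hV : IsStratification L V s) {j : ℕ} {x y : L} (hx : x ∈ V 1)
    (hy : y ∈ V j) : ⁅x, y⁆ ∈ V (j + 1) := by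
  rcases Nat.lt_or_ge s j with hj | hj
  · simp [hV.eq_zero_of_mem_of_notMem_Icc (by rw [Set.mem_Icc]; omega) hy]
  rcases Nat.eq_zero_or_pos j with rfl | hj0
  · simp [hV.eq_zero_of_mem_of_notMem_Icc (by rw [Set.mem_Icc]; omega) hy]
  rcases hj.lt_or_eq with hj | rfl
  · rw [← hV.bracket_eq (j + 1) (by omega) (by omega)]
    exact Submodule.subset_span ⟨x, hx, y, hy, rfl⟩
  · have : ⁅x, y⁆ ∈ bracketSpan (V 1) (V j) := Submodule.subset_span ⟨x, hx, y, hy, rfl⟩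
    rw [hV.bracket_last_eq_bot, Submodule.mem_bot] at this
    simp [this]

theorem lie_mem (hV : IsStratification L V s) {i j : ℕ} {x y : L} (hx : x ∈ V i)
    (hy : y ∈ V j) : ⁅x, y⁆ ∈ V (i + j) := by
  induction i generalizing j x y with
  | zero => simp [hV.eq_zero_of_mem_of_notMem_Icc (by rw [Set.mem_Icc]; omega) hx]
  | succ i ih =>
    rcases Nat.eq_zero_or_pos i with rfl | hi
    · rw [add_comm]; exact hV.lie_mem_of_mem_one hx hy
    rcases Nat.lt_or_ge s (i + 1) with his | his
    · simp [hV.eq_zero_of_mem_of_notMem_Icc (by rw [Set.mem_Icc]; omega) hx]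
    rw [← hV.bracket_eq (i + 1) (by omega) his] at hx
    induction hx using Submodule.span_induction with
    | mem z hz =>
      obtain ⟨a, ha, b, hb, rfl⟩ := hz
      rw [lie_lie]
      refine sub_mem ?_ ?_
      · simpa [add_right_comm] using hV.lie_mem_of_mem_one ha (ih hb hy)
      · simpa [add_assoc, add_comm 1] using ih hb (hV.lie_mem_of_mem_one ha hy)
    | zero => simp
    | add a b _ _ ha hb => rw [add_lie]; exact add_mem ha hb
    | smul c a _ ha => rw [smul_lie]; exact Submodule.smul_mem _ c ha

theorem eq_bot_of_two_eq_bot (hV : IsStratification L V s) (h2 : V 2 = ⊥) {j : ℕ}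
    (hj : 2 ≤ j) : V j = ⊥ := by
  induction j, hj using Nat.le_induction with
  | base => exact h2
  | succ j hj ih =>
    rcases Nat.lt_or_ge s (j + 1) with hjs | hjs
    · exact hV.eq_bot_of_gt _ hjs
    rw [← hV.bracket_eq (j + 1) (by omega) hjs, Nat.add_sub_cancel, ih, bracketSpan,
      Submodule.span_eq_bot]
    rintro _ ⟨x, -, y, hy, rfl⟩
    simp [(Submodule.mem_bot ℝ).1 hy]

theorem two_ne_bot (hV : IsStratification L V s) (hs : 2 ≤ s) : V 2 ≠ ⊥ :=
  fun h2 ↦ hV.last_ne_bot (hV.eq_bot_of_two_eq_bot h2 hs)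

theorem two_le_commutatorSubmodule (hV : IsStratification L V s) (hs : 2 ≤ s) :
    V 2 ≤ commutatorSubmodule L := by
  rw [← hV.bracket_eq 2 le_rfl hs]
  refine Submodule.span_mono ?_
  rintro _ ⟨x, -, y, -, rfl⟩
  exact ⟨x, Submodule.mem_top, y, Submodule.mem_top, rfl⟩

theorem iSupIndep (hV : IsStratification L V s) : iSupIndep V := by
  have hIcc : ∀ i : {i // V i ≠ ⊥}, i.1 ∈ Set.Icc 1 s := fun i ↦
    not_imp_comm.1 hV.eq_bot_of_notMem_Icc i.2
  let f : {i // V i ≠ ⊥} → Fin s := fun i ↦ ⟨i.1 - 1, by have := hIcc i; grind⟩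
  have hf : Function.Injective f := fun i j hij ↦ by
    have := hIcc i; have := hIcc j; have := Fin.val_eq_of_eq hij; grind
  rw [← iSupIndep_ne_bot]
  convert hV.isInternal.submodule_iSupIndep.comp hf with i
  have := hIcc i
  simp only [Function.comp_apply, f]
  grind

theorem exists_dual_supported_on_two (hV : IsStratification L V s) (hs : 2 ≤ s) :
    ∃ φ : Dual ℝ L, (∀ j ≠ 2, V j ≤ LinearMap.ker φ) ∧ ∃ v ∈ V 2, φ v ≠ 0 := by
  obtain ⟨v, hv2, hv⟩ := Submodule.exists_mem_ne_zero_of_ne_bot (hV.two_ne_bot hs)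
  have hvQ : v ∉ ⨆ (j) (_ : j ≠ 2), V j := fun h ↦
    hv ((Submodule.disjoint_def.1 (hV.iSupIndep 2)) v hv2 h)
  obtain ⟨φ, hφv, hφQ⟩ := Submodule.exists_dual_map_eq_bot_of_notMem hvQ inferInstance
  refine ⟨φ, fun j hj ↦ ?_, v, hv2, hφv⟩
  exact (le_biSup V hj).trans (LinearMap.le_ker_iff_map.2 hφQ)

end IsStratification

section Filtration

variable {L : Type*} [LieRing L] [LieAlgebra ℝ L] {V : ℕ → Submodule ℝ L} {s : ℕ}

def strataFrom (V : ℕ → Submodule ℝ L) (n : ℕ) : Submodule ℝ L :=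
  ⨆ t, V (n + t)

theorem le_strataFrom {n i : ℕ} (h : n ≤ i) : V i ≤ strataFrom V n :=
  le_iSup_of_le (i - n) (by rw [Nat.add_sub_cancel' h])

theorem strataFrom_antitone : Antitone (strataFrom V) := fun _ _ h ↦
  iSup_le fun _ ↦ le_strataFrom (by omega)

theorem IsStratification.lie_mem_strataFrom (hV : IsStratification L V s) {i j : ℕ}
    {x y : L} (hx : x ∈ strataFrom V i) (hy : y ∈ strataFrom V j) :
    ⁅x, y⁆ ∈ strataFrom V (i + j) := by
  induction hx using Submodule.iSup_induction' with
  | mem a x hx =>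
    induction hy using Submodule.iSup_induction' with
    | mem b y hy => exact le_strataFrom (by omega) (hV.lie_mem hx hy)
    | zero => simp
    | add _ _ _ _ h h' => rw [lie_add]; exact add_mem h h'
  | zero => simp
  | add _ _ _ _ h h' => rw [add_lie]; exact add_mem h h'

open LieSubalgebra in
theorem IsStratification.lieSpan_le_ker (hV : IsStratification L V s) {P : Submodule ℝ L}
    (hP : P ≤ V 1) {φ : Dual ℝ L} (hφ : ∀ j ≠ 2, V j ≤ LinearMap.ker φ)
    (hPφ : ∀ x ∈ P, ∀ y ∈ P, φ ⁅x, y⁆ = 0) :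
    (lieSpan ℝ L (P : Set L)).toSubmodule ≤ LinearMap.ker φ := by
  have hF3 : strataFrom V 3 ≤ LinearMap.ker φ := iSup_le fun _ ↦ hφ _ (by omega)
  have hP1 : P ≤ strataFrom V 1 := hP.trans (le_strataFrom le_rfl)
  have hF21 : strataFrom V 2 ≤ strataFrom V 1 := strataFrom_antitone (by norm_num)
  -- Modulo `strataFrom V 3`, a bracket of elements of `P ⊔ strataFrom V 2` is a bracket in `P`.
  let H : LieSubalgebra ℝ L :=
    { toSubmodule := (P ⊔ strataFrom V 2) ⊓ LinearMap.ker φ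
      lie_mem' := by
        rintro x y ⟨hx, -⟩ ⟨hy, -⟩
        obtain ⟨p, hp, n, hn, rfl⟩ := Submodule.mem_sup.1 hx
        obtain ⟨p', hp', n', hn', rfl⟩ := Submodule.mem_sup.1 hy
        have hpp : ⁅p, p'⁆ ∈ V 2 := hV.lie_mem (hP hp) (hP hp')
        have hpn : ⁅p, n'⁆ ∈ strataFrom V (1 + 2) := hV.lie_mem_strataFrom (hP1 hp) hn'
        have hny : ⁅n, p' + n'⁆ ∈ strataFrom V (2 + 1) :=
          hV.lie_mem_strataFrom hn (sup_le hP1 hF21 hy)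
        have hrest : ⁅p, n'⁆ + ⁅n, p' + n'⁆ ∈ strataFrom V 3 := add_mem hpn hny
        rw [show ⁅p + n, p' + n'⁆ = ⁅p, p'⁆ + (⁅p, n'⁆ + ⁅n, p' + n'⁆) by
          simp only [add_lie, lie_add]; abel]
        refine ⟨Submodule.mem_sup_right (add_mem (le_strataFrom le_rfl hpp)
          (strataFrom_antitone (by norm_num) hrest)), ?_⟩
        rw [SetLike.mem_coe, LinearMap.mem_ker, map_add, hPφ p hp p' hp',
          LinearMap.mem_ker.1 (hF3 hrest), add_zero] }
  calc (lieSpan ℝ L (P : Set L)).toSubmodule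
      ≤ H.toSubmodule :=
        lieSpan_le.2 fun x hx ↦ ⟨Submodule.mem_sup_left hx, hφ 1 (by norm_num) (hP hx)⟩
    _ ≤ LinearMap.ker φ := inf_le_right

end Filtration

/-- If a stratified real Lie algebra `𝔤 = V₁ ⊕ ⋯ ⊕ V_s` of step `s ≥ 2`
and rank `m` is hypergenerated of order `k`, then `m ≥ 2(k+1)`. -/
theorem rank_ge_of_isHypergenerated {L : Type*} [LieRing L] [LieAlgebra ℝ L]
    [FiniteDimensional ℝ L] (V : ℕ → Submodule ℝ L) (s m k : ℕ) (hs : 2 ≤ s)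
    (hst : IsStratification L V s) (hm : Module.finrank ℝ (V 1) = m)
    (h : IsHypergenerated L V k) :
    2 * (k + 1) ≤ m := by
  by_contra! hm_lt
  obtain ⟨φ, hφ, v, hv2, hφv⟩ := hst.exists_dual_supported_on_two hs
  let B : L →ₗ[ℝ] L →ₗ[ℝ] ℝ :=
    (LieAlgebra.ad ℝ L : L →ₗ[ℝ] Module.End ℝ L).compr₂ φ
  have hB : B.IsAlt := fun x ↦ by simp [B]
  obtain ⟨P, hPV, hPdim, hPiso⟩ := hB.exists_isotropic_submodule (m - k) (V 1) (by omega)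
  have hgen := h P hPV (by rw [hPdim, hm])
  exact hφv (hst.lieSpan_le_ker hPV hφ hPiso (hgen (hst.two_le_commutatorSubmodule hs hv2)))
end

section
/- Let 𝔤₁ and 𝔤₂ be stratified real Lie algebras and endow the product Lie algebra 𝔤₁ × 𝔤₂ with the product stratification whose i-th stratum is V_i(𝔤₁) × V_i(𝔤₂) (strata beyond the step of a factor being zero). Then, for every integer k ≥ 0, the product 𝔤₁ × 𝔤₂ is hypergenerated of order k if and only if both 𝔤₁ and 𝔤₂ are hypergenerated of order k. -/
/-- The product of two Lie rings, with componentwise bracket. -/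
instance prodLieRing (L₁ L₂ : Type*) [LieRing L₁] [LieRing L₂] : LieRing (L₁ × L₂) where
  bracket x y := (⁅x.1, y.1⁆, ⁅x.2, y.2⁆)
  add_lie x y z := Prod.ext (add_lie x.1 y.1 z.1) (add_lie x.2 y.2 z.2)
  lie_add x y z := Prod.ext (lie_add x.1 y.1 z.1) (lie_add x.2 y.2 z.2)
  lie_self x := Prod.ext (lie_self x.1) (lie_self x.2)
  leibniz_lie x y z := Prod.ext (leibniz_lie x.1 y.1 z.1) (leibniz_lie x.2 y.2 z.2)

/-- The product of two real Lie algebras. -/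
instance prodLieAlgebra (L₁ L₂ : Type*) [LieRing L₁] [LieRing L₂]
    [LieAlgebra ℝ L₁] [LieAlgebra ℝ L₂] : LieAlgebra ℝ (L₁ × L₂) :=
  { (inferInstance : Module ℝ (L₁ × L₂)) with
    lie_smul := fun c x y => Prod.ext (lie_smul c x.1 y.1) (lie_smul c x.2 y.2) }

@[simp] theorem prod_lie_fst {L₁ L₂ : Type*} [LieRing L₁] [LieRing L₂] (x y : L₁ × L₂) :
    (⁅x, y⁆ : L₁ × L₂).1 = ⁅x.1, y.1⁆ := rfl

@[simp] theorem prod_lie_snd {L₁ L₂ : Type*} [LieRing L₁] [LieRing L₂] (x y : L₁ × L₂) :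
    (⁅x, y⁆ : L₁ × L₂).2 = ⁅x.2, y.2⁆ := rfl

section Aux

variable {L₁ L₂ : Type*} [LieRing L₁] [LieAlgebra ℝ L₁] [LieRing L₂] [LieAlgebra ℝ L₂]

lemma lie_mem_commutator {L : Type*} [LieRing L] [LieAlgebra ℝ L] (x y : L) :
    ⁅x, y⁆ ∈ commutatorSubmodule L :=
  Submodule.subset_span ⟨x, trivial, y, trivial, rfl⟩

def lieFst : (L₁ × L₂) →ₗ⁅ℝ⁆ L₁ :=
  { LinearMap.fst ℝ L₁ L₂ with map_lie' := fun {_ _} => rfl }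

def lieSnd : (L₁ × L₂) →ₗ⁅ℝ⁆ L₂ :=
  { LinearMap.snd ℝ L₁ L₂ with map_lie' := fun {_ _} => rfl }

def lieInl : L₁ →ₗ⁅ℝ⁆ (L₁ × L₂) :=
  { LinearMap.inl ℝ L₁ L₂ with map_lie' := fun {_ _} => Prod.ext rfl (zero_lie 0).symm }

def lieInr : L₂ →ₗ⁅ℝ⁆ (L₁ × L₂) :=
  { LinearMap.inr ℝ L₁ L₂ with map_lie' := fun {_ _} => Prod.ext (zero_lie 0).symm rfl }

lemma commutator_prod_le :
    commutatorSubmodule (L₁ × L₂) ≤ (commutatorSubmodule L₁).prod (commutatorSubmodule L₂) := by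
  apply Submodule.span_le.mpr
  rintro z ⟨x, -, y, -, rfl⟩
  exact ⟨lie_mem_commutator x.1 y.1, lie_mem_commutator x.2 y.2⟩

lemma inl_mem_commutator {x : L₁} (hx : x ∈ commutatorSubmodule L₁) :
    ((x, 0) : L₁ × L₂) ∈ commutatorSubmodule (L₁ × L₂) := by
  have h : Submodule.map (LinearMap.inl ℝ L₁ L₂) (commutatorSubmodule L₁) ≤
      commutatorSubmodule (L₁ × L₂) := by
    rw [commutatorSubmodule, commutatorSubmodule, bracketSpan, bracketSpan,
      Submodule.map_span, Submodule.span_le]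
    rintro z ⟨w, ⟨a, -, b, -, rfl⟩, rfl⟩
    exact Submodule.subset_span ⟨(a, 0), trivial, (b, 0), trivial,
      Prod.ext rfl (zero_lie 0)⟩
  exact h ⟨x, hx, rfl⟩

lemma inr_mem_commutator {x : L₂} (hx : x ∈ commutatorSubmodule L₂) :
    ((0, x) : L₁ × L₂) ∈ commutatorSubmodule (L₁ × L₂) := by
  have h : Submodule.map (LinearMap.inr ℝ L₁ L₂) (commutatorSubmodule L₂) ≤
      commutatorSubmodule (L₁ × L₂) := by
    rw [commutatorSubmodule, commutatorSubmodule, bracketSpan, bracketSpan,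
      Submodule.map_span, Submodule.span_le]
    rintro z ⟨w, ⟨a, -, b, -, rfl⟩, rfl⟩
    exact Submodule.subset_span ⟨(0, a), trivial, (0, b), trivial,
      Prod.ext (zero_lie 0) rfl⟩
  exact h ⟨x, hx, rfl⟩

lemma exists_submodule_finrank_eq' {V : Type*} [AddCommGroup V] [Module ℝ V]
    [FiniteDimensional ℝ V] {n : ℕ} (h : n ≤ Module.finrank ℝ V) :
    ∃ S : Submodule ℝ V, Module.finrank ℝ S = n := by
  let b := Module.finBasis ℝ V
  refine ⟨Submodule.span ℝ (Set.range (b ∘ Fin.castLE h)), ?_⟩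
  rw [finrank_span_eq_card (b.linearIndependent.comp _ (Fin.castLE_injective h))]
  simp

lemma exists_le_finrank_eq {M : Type*} [AddCommGroup M] [Module ℝ M]
    (P : Submodule ℝ M) [FiniteDimensional ℝ M] {n : ℕ} (h : n ≤ Module.finrank ℝ P) :
    ∃ S : Submodule ℝ M, S ≤ P ∧ Module.finrank ℝ S = n := by
  obtain ⟨S, hS⟩ := exists_submodule_finrank_eq' (V := ↥P) h
  refine ⟨S.map P.subtype, Submodule.map_subtype_le P S, ?_⟩
  rw [← (Submodule.equivMapOfInjective P.subtype P.injective_subtype S).finrank_eq, hS]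

lemma finrank_prod_submodule (p : Submodule ℝ L₁) (q : Submodule ℝ L₂)
    [FiniteDimensional ℝ L₁] [FiniteDimensional ℝ L₂] :
    Module.finrank ℝ (p.prod q) = Module.finrank ℝ p + Module.finrank ℝ q := by
  have e : ↥(p.prod q) ≃ₗ[ℝ] ↥p × ↥q :=
    { toFun := fun z => (⟨z.1.1, z.2.1⟩, ⟨z.1.2, z.2.2⟩)
      map_add' := fun _ _ => rfl
      map_smul' := fun _ _ => rfl
      invFun := fun w => ⟨(w.1.1, w.2.1), ⟨w.1.2, w.2.2⟩⟩
      left_inv := fun _ => rfl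
      right_inv := fun _ => rfl }
  rw [e.finrank_eq, Module.finrank_prod]

end Aux


/-- Given stratified real Lie algebras `𝔤₁` and `𝔤₂`, the product
`𝔤₁ × 𝔤₂`, endowed with the product stratification whose `i`-th stratum is
`V_i(𝔤₁) × V_i(𝔤₂)` (strata beyond the step of a factor being zero), is hypergenerated of
order `k` if and only if both `𝔤₁` and `𝔤₂` are hypergenerated of order `k`. -/
theorem prod_isHypergenerated_iff {L₁ L₂ : Type*} [LieRing L₁] [LieAlgebra ℝ L₁]
    [FiniteDimensional ℝ L₁] [LieRing L₂] [LieAlgebra ℝ L₂] [FiniteDimensional ℝ L₂]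
    (V : ℕ → Submodule ℝ L₁) (W : ℕ → Submodule ℝ L₂) (s₁ s₂ k : ℕ)
    (hV : IsStratification L₁ V s₁) (hW : IsStratification L₂ W s₂) :
    IsHypergenerated (L₁ × L₂) (fun i => (V i).prod (W i)) k ↔
      IsHypergenerated L₁ V k ∧ IsHypergenerated L₂ W k := by
  have hab : Module.finrank ℝ ((V 1).prod (W 1)) =
      Module.finrank ℝ (V 1) + Module.finrank ℝ (W 1) := finrank_prod_submodule _ _
  constructor
  · intro hProd
    constructor
    · intro P hPV hPrank
      obtain ⟨W', hW'le, hW'rank⟩ := exists_le_finrank_eq (W 1)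
        (show Module.finrank ℝ ((V 1).prod (W 1)) - k - (Module.finrank ℝ (V 1) - k)
          ≤ Module.finrank ℝ (W 1) by omega)
      have hQrank : Module.finrank ℝ (P.prod W') =
          Module.finrank ℝ ((V 1).prod (W 1)) - k := by
        rw [finrank_prod_submodule, hPrank, hW'rank]; omega
      have h := hProd (P.prod W') (Submodule.prod_mono hPV hW'le) hQrank
      intro x hx
      have hx' := h (inl_mem_commutator hx)
      have hcom : LieSubalgebra.lieSpan ℝ (L₁ × L₂) ((P.prod W') : Set (L₁ × L₂)) ≤
          LieSubalgebra.comap lieFst (LieSubalgebra.lieSpan ℝ L₁ (P : Set L₁)) := by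
        rw [LieSubalgebra.lieSpan_le]
        rintro z hz
        exact LieSubalgebra.subset_lieSpan hz.1
      exact hcom hx'
    · intro P hPW hPrank
      obtain ⟨V', hV'le, hV'rank⟩ := exists_le_finrank_eq (V 1)
        (show Module.finrank ℝ ((V 1).prod (W 1)) - k - (Module.finrank ℝ (W 1) - k)
          ≤ Module.finrank ℝ (V 1) by omega)
      have hQrank : Module.finrank ℝ (V'.prod P) =
          Module.finrank ℝ ((V 1).prod (W 1)) - k := by
        rw [finrank_prod_submodule, hPrank, hV'rank]; omega
      have h := hProd (V'.prod P) (Submodule.prod_mono hV'le hPW) hQrank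
      intro x hx
      have hx' := h (inr_mem_commutator hx)
      have hcom : LieSubalgebra.lieSpan ℝ (L₁ × L₂) ((V'.prod P) : Set (L₁ × L₂)) ≤
          LieSubalgebra.comap lieSnd (LieSubalgebra.lieSpan ℝ L₂ (P : Set L₂)) := by
        rw [LieSubalgebra.lieSpan_le]
        rintro z hz
        exact LieSubalgebra.subset_lieSpan hz.2
      exact hcom hx'
  · rintro ⟨h1, h2⟩
    intro Q hQle hQrank
    have hQrank' : Module.finrank ℝ Q = Module.finrank ℝ ((V 1).prod (W 1)) - k := hQrank
    have hP₁V : Submodule.comap (LinearMap.inl ℝ L₁ L₂) Q ≤ V 1 :=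
      fun x hx => (hQle hx).1
    have hP₂W : Submodule.comap (LinearMap.inr ℝ L₁ L₂) Q ≤ W 1 :=
      fun x hx => (hQle hx).2
    have hrk1 : Module.finrank ℝ Q ≤
        Module.finrank ℝ (Submodule.comap (LinearMap.inl ℝ L₁ L₂) Q) +
          Module.finrank ℝ (W 1) := by
      set f : ↥Q →ₗ[ℝ] L₂ := (LinearMap.snd ℝ L₁ L₂).comp Q.subtype with hf
      have hker : Module.finrank ℝ (LinearMap.ker f) ≤
          Module.finrank ℝ (Submodule.comap (LinearMap.inl ℝ L₁ L₂) Q) := by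
        have hg : ∀ w : LinearMap.ker f,
            ((((w : ↥Q) : L₁ × L₂).1, (0 : L₂)) : L₁ × L₂) ∈ Q := by
          intro w
          have h0 : ((w : ↥Q) : L₁ × L₂).2 = 0 := LinearMap.mem_ker.mp w.2
          have he : ((((w : ↥Q) : L₁ × L₂).1, (0 : L₂)) : L₁ × L₂) = ((w : ↥Q) : L₁ × L₂) := by
            rw [← h0]
          rw [he]; exact (w : ↥Q).2
        refine LinearMap.finrank_le_finrank_of_injective
          (f := { toFun := fun w : LinearMap.ker f =>
                    (⟨((w : ↥Q) : L₁ × L₂).1, hg w⟩ :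
                      ↥(Submodule.comap (LinearMap.inl ℝ L₁ L₂) Q))
                  map_add' := fun _ _ => rfl
                  map_smul' := fun _ _ => rfl }) ?_
        intro w w' hww
        have h1' : ((w : ↥Q) : L₁ × L₂).1 = ((w' : ↥Q) : L₁ × L₂).1 :=
          congrArg Subtype.val hww
        have hw0 : ((w : ↥Q) : L₁ × L₂).2 = 0 := LinearMap.mem_ker.mp w.2
        have hw0' : ((w' : ↥Q) : L₁ × L₂).2 = 0 := LinearMap.mem_ker.mp w'.2
        have h2' : ((w : ↥Q) : L₁ × L₂).2 = ((w' : ↥Q) : L₁ × L₂).2 := by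
          rw [hw0, hw0']
        exact Subtype.ext (Subtype.ext (Prod.ext h1' h2'))
      have hrange : LinearMap.range f ≤ W 1 := by
        rintro y ⟨z, rfl⟩; exact (hQle z.2).2
      have hrn := LinearMap.finrank_range_add_finrank_ker f
      have hr : Module.finrank ℝ (LinearMap.range f) ≤ Module.finrank ℝ (W 1) :=
        Submodule.finrank_mono hrange
      omega
    have hrk2 : Module.finrank ℝ Q ≤
        Module.finrank ℝ (Submodule.comap (LinearMap.inr ℝ L₁ L₂) Q) +
          Module.finrank ℝ (V 1) := by
      set f : ↥Q →ₗ[ℝ] L₁ := (LinearMap.fst ℝ L₁ L₂).comp Q.subtype with hf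
      have hker : Module.finrank ℝ (LinearMap.ker f) ≤
          Module.finrank ℝ (Submodule.comap (LinearMap.inr ℝ L₁ L₂) Q) := by
        have hg : ∀ w : LinearMap.ker f,
            (((0 : L₁), ((w : ↥Q) : L₁ × L₂).2) : L₁ × L₂) ∈ Q := by
          intro w
          have h0 : ((w : ↥Q) : L₁ × L₂).1 = 0 := LinearMap.mem_ker.mp w.2
          have he : (((0 : L₁), ((w : ↥Q) : L₁ × L₂).2) : L₁ × L₂) = ((w : ↥Q) : L₁ × L₂) := by
            rw [← h0]
          rw [he]; exact (w : ↥Q).2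
        refine LinearMap.finrank_le_finrank_of_injective
          (f := { toFun := fun w : LinearMap.ker f =>
                    (⟨((w : ↥Q) : L₁ × L₂).2, hg w⟩ :
                      ↥(Submodule.comap (LinearMap.inr ℝ L₁ L₂) Q))
                  map_add' := fun _ _ => rfl
                  map_smul' := fun _ _ => rfl }) ?_
        intro w w' hww
        have h2' : ((w : ↥Q) : L₁ × L₂).2 = ((w' : ↥Q) : L₁ × L₂).2 :=
          congrArg Subtype.val hww
        have hw0 : ((w : ↥Q) : L₁ × L₂).1 = 0 := LinearMap.mem_ker.mp w.2
        have hw0' : ((w' : ↥Q) : L₁ × L₂).1 = 0 := LinearMap.mem_ker.mp w'.2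
        have h1' : ((w : ↥Q) : L₁ × L₂).1 = ((w' : ↥Q) : L₁ × L₂).1 := by
          rw [hw0, hw0']
        exact Subtype.ext (Subtype.ext (Prod.ext h1' h2'))
      have hrange : LinearMap.range f ≤ V 1 := by
        rintro y ⟨z, rfl⟩; exact (hQle z.2).1
      have hrn := LinearMap.finrank_range_add_finrank_ker f
      have hr : Module.finrank ℝ (LinearMap.range f) ≤ Module.finrank ℝ (V 1) :=
        Submodule.finrank_mono hrange
      omega
    obtain ⟨P₀, hP₀le, hP₀rank⟩ := exists_le_finrank_eq
      (Submodule.comap (LinearMap.inl ℝ L₁ L₂) Q)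
      (show Module.finrank ℝ (V 1) - k ≤ _ by omega)
    obtain ⟨P₀', hP₀'le, hP₀'rank⟩ := exists_le_finrank_eq
      (Submodule.comap (LinearMap.inr ℝ L₁ L₂) Q)
      (show Module.finrank ℝ (W 1) - k ≤ _ by omega)
    have hc1 := h1 P₀ (hP₀le.trans hP₁V) hP₀rank
    have hc2 := h2 P₀' (hP₀'le.trans hP₂W) hP₀'rank
    intro z hz
    have hz1 := (commutator_prod_le hz).1
    have hz2 := (commutator_prod_le hz).2
    have hsub1 : LieSubalgebra.lieSpan ℝ L₁ (P₀ : Set L₁) ≤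
        LieSubalgebra.comap lieInl
          (LieSubalgebra.lieSpan ℝ (L₁ × L₂) (Q : Set (L₁ × L₂))) := by
      rw [LieSubalgebra.lieSpan_le]
      intro x hx
      exact LieSubalgebra.subset_lieSpan (Submodule.mem_comap.mp (hP₀le hx))
    have hsub2 : LieSubalgebra.lieSpan ℝ L₂ (P₀' : Set L₂) ≤
        LieSubalgebra.comap lieInr
          (LieSubalgebra.lieSpan ℝ (L₁ × L₂) (Q : Set (L₁ × L₂))) := by
      rw [LieSubalgebra.lieSpan_le]
      intro x hx
      exact LieSubalgebra.subset_lieSpan (Submodule.mem_comap.mp (hP₀'le hx))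
    have e1 : ((z.1, 0) : L₁ × L₂) ∈
        (LieSubalgebra.lieSpan ℝ (L₁ × L₂) (Q : Set (L₁ × L₂))).toSubmodule :=
      hsub1 (hc1 hz1)
    have e2 : ((0, z.2) : L₁ × L₂) ∈
        (LieSubalgebra.lieSpan ℝ (L₁ × L₂) (Q : Set (L₁ × L₂))).toSubmodule :=
      hsub2 (hc2 hz2)
    have hzeq : z = ((z.1, 0) : L₁ × L₂) + (0, z.2) := by
      ext <;> simp
    rw [hzeq]
    exact Submodule.add_mem _ e1 e2
end

section
/- Let 𝔤₁ and 𝔤₂ be non-abelian stratified real Lie algebras of step 2. Then the Métivier order of the product is the minimum of the Métivier orders: order(𝔤₁ × 𝔤₂) = min{order(𝔤₁), order(𝔤₂)}, where the product carries the product stratification with first stratum V₁(𝔤₁) × V₁(𝔤₂) and second stratum V₂(𝔤₁) × V₂(𝔤₂). -/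
/-- Brackets of elements of `V₁(𝔤₁) × V₁(𝔤₂)` lie in `V₂(𝔤₁) × V₂(𝔤₂)`: the closure
property needed to form the Kaplan operator of the product stratification. -/
theorem prod_lie_mem_sq {L₁ L₂ : Type*} [LieRing L₁] [LieAlgebra ℝ L₁]
    [LieRing L₂] [LieAlgebra ℝ L₂] {V : ℕ → Submodule ℝ L₁} {W : ℕ → Submodule ℝ L₂}
    (hV : IsStratification L₁ V 2) (hW : IsStratification L₂ W 2) :
    ∀ v ∈ (V 1).prod (W 1), ∀ w ∈ (V 1).prod (W 1), ⁅v, w⁆ ∈ (V 2).prod (W 2) := by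
  intro v hv w hw
  rw [Submodule.mem_prod] at hv hw ⊢
  exact ⟨hV.lie_mem_sq le_rfl _ hv.1 _ hw.1, hW.lie_mem_sq le_rfl _ hv.2 _ hw.2⟩

/-
The Kaplan form of the product at `μ = (μ₁, μ₂)` is the orthogonal sum of `J_{μ₁}` and
`J_{μ₂}`, so its rank is `rank J_{μ₁} + rank J_{μ₂}`. Since `(μ₁, μ₂) ≠ 0` forces one component
to be nonzero, every such rank is at least the smaller of the two orders; conversely `(μ₁, 0)` and
`(0, μ₂)` realise the order of each factor, because the zero form has rank `0`.
-/

namespace Submodule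

section

variable {R M N : Type*} [Semiring R] [AddCommMonoid M] [Module R M] [AddCommMonoid N]
  [Module R N]

def prodEquiv (p : Submodule R M) (q : Submodule R N) : p.prod q ≃ₗ[R] p × q where
  toFun x := (⟨x.1.1, x.2.1⟩, ⟨x.1.2, x.2.2⟩)
  map_add' _ _ := rfl
  map_smul' _ _ := rfl
  invFun a := ⟨(a.1, a.2), a.1.2, a.2.2⟩
  left_inv _ := rfl
  right_inv _ := rfl

theorem finrank_prod [StrongRankCondition R] (p : Submodule R M) (q : Submodule R N)
    [Module.Free R p] [Module.Free R q] [Module.Finite R p] [Module.Finite R q] :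
    Module.finrank R (p.prod q) = Module.finrank R p + Module.finrank R q := by
  rw [(p.prodEquiv q).finrank_eq, Module.finrank_prod]

end

def prodDualEquiv {R M N : Type*} [CommSemiring R] [AddCommMonoid M] [Module R M]
    [AddCommMonoid N] [Module R N] (p : Submodule R M) (q : Submodule R N) :
    (Module.Dual R p × Module.Dual R q) ≃ₗ[R] Module.Dual R (p.prod q) :=
  (Module.dualProdDualEquivDual R p q).trans (p.prodEquiv q).dualMap

end Submodule

section FormRank

variable {M M₁ M₂ : Type*} [AddCommGroup M] [Module ℝ M] [AddCommGroup M₁] [Module ℝ M₁]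
  [AddCommGroup M₂] [Module ℝ M₂]

theorem formRank_zero : formRank (0 : LinearMap.BilinForm ℝ M) = 0 := by
  rw [formRank, LinearMap.ker_zero, finrank_top, Nat.sub_self]

theorem ker_eq_comap_prod_of_linearEquiv_prod {ω : LinearMap.BilinForm ℝ M}
    {ω₁ : LinearMap.BilinForm ℝ M₁} {ω₂ : LinearMap.BilinForm ℝ M₂} (e : M ≃ₗ[ℝ] M₁ × M₂)
    (hω : ∀ x y, ω x y = ω₁ (e x).1 (e y).1 + ω₂ (e x).2 (e y).2) :
    LinearMap.ker ω =
      ((LinearMap.ker ω₁).prod (LinearMap.ker ω₂)).comap (e : M →ₗ[ℝ] M₁ × M₂) := by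
  ext x
  simp only [Submodule.mem_comap, Submodule.mem_prod, LinearMap.mem_ker, LinearMap.ext_iff,
    LinearMap.zero_apply, LinearEquiv.coe_coe]
  constructor
  · intro hx
    refine ⟨fun y₁ => ?_, fun y₂ => ?_⟩
    · simpa [hω] using hx (e.symm (y₁, 0))
    · simpa [hω] using hx (e.symm (0, y₂))
  · rintro ⟨hx₁, hx₂⟩ y
    rw [hω, hx₁, hx₂, add_zero]

theorem formRank_eq_add_of_linearEquiv_prod [FiniteDimensional ℝ M₁] [FiniteDimensional ℝ M₂]
    {ω : LinearMap.BilinForm ℝ M} {ω₁ : LinearMap.BilinForm ℝ M₁}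
    {ω₂ : LinearMap.BilinForm ℝ M₂} (e : M ≃ₗ[ℝ] M₁ × M₂)
    (hω : ∀ x y, ω x y = ω₁ (e x).1 (e y).1 + ω₂ (e x).2 (e y).2) :
    formRank ω = formRank ω₁ + formRank ω₂ := by
  have hker : Module.finrank ℝ (LinearMap.ker ω) =
      Module.finrank ℝ (LinearMap.ker ω₁) + Module.finrank ℝ (LinearMap.ker ω₂) := by
    rw [← e.finrank_map_eq, ker_eq_comap_prod_of_linearEquiv_prod e hω,
      Submodule.map_comap_eq_of_surjective e.surjective, Submodule.finrank_prod]
  have hle₁ := (LinearMap.ker ω₁).finrank_le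
  have hle₂ := (LinearMap.ker ω₂).finrank_le
  simp only [formRank, hker, e.finrank_eq, Module.finrank_prod]
  omega

end FormRank

theorem Nat.sInf_ne_zero_add_eq_min {A B : Type*} [Zero A] [Zero B] [Nontrivial A]
    [Nontrivial B] {f : A → ℕ} {g : B → ℕ} (hf : f 0 = 0) (hg : g 0 = 0) :
    sInf {r | ∃ x : A × B, x ≠ 0 ∧ r = f x.1 + g x.2} =
      min (sInf {r | ∃ a, a ≠ 0 ∧ r = f a}) (sInf {r | ∃ b, b ≠ 0 ∧ r = g b}) := by
  obtain ⟨a₀, ha₀⟩ := exists_ne (0 : A)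
  obtain ⟨b₀, hb₀⟩ := exists_ne (0 : B)
  apply le_antisymm
  · apply le_min
    · obtain ⟨a, ha, hfa⟩ := Nat.sInf_mem (s := {r | ∃ a, a ≠ 0 ∧ r = f a}) ⟨_, a₀, ha₀, rfl⟩
      exact hfa ▸ Nat.sInf_le ⟨(a, 0), by simp [ha], by rw [hg, add_zero]⟩
    · obtain ⟨b, hb, hgb⟩ := Nat.sInf_mem (s := {r | ∃ b, b ≠ 0 ∧ r = g b}) ⟨_, b₀, hb₀, rfl⟩
      exact hgb ▸ Nat.sInf_le ⟨(0, b), by simp [hb], by rw [hf, zero_add]⟩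
  · refine le_csInf ⟨_, (a₀, 0), by simp [ha₀], rfl⟩ ?_
    rintro _ ⟨⟨a, b⟩, hab, rfl⟩
    by_cases ha : a = 0
    · have hb : b ≠ 0 := fun hb => hab (by simp [ha, hb])
      calc min _ _ ≤ sInf {r | ∃ b, b ≠ 0 ∧ r = g b} := min_le_right _ _
        _ ≤ g b := Nat.sInf_le ⟨b, hb, rfl⟩
        _ ≤ f a + g b := Nat.le_add_left _ _
    · calc min _ _ ≤ sInf {r | ∃ a, a ≠ 0 ∧ r = f a} := min_le_left _ _
        _ ≤ f a := Nat.sInf_le ⟨a, ha, rfl⟩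
        _ ≤ f a + g b := Nat.le_add_right _ _

section Kaplan

variable {L₁ L₂ : Type*} [LieRing L₁] [LieAlgebra ℝ L₁] [LieRing L₂] [LieAlgebra ℝ L₂]

theorem kaplan_zero {L : Type*} [LieRing L] [LieAlgebra ℝ L] (V₁ V₂ : Submodule ℝ L)
    (h : ∀ v ∈ V₁, ∀ w ∈ V₁, ⁅v, w⁆ ∈ V₂) : kaplan V₁ V₂ h 0 = 0 := by
  ext
  simp [kaplan]

theorem formRank_kaplan_prod {p₁ p₂ : Submodule ℝ L₁} {q₁ q₂ : Submodule ℝ L₂}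
    [FiniteDimensional ℝ p₁] [FiniteDimensional ℝ q₁]
    (h : ∀ v ∈ p₁.prod q₁, ∀ w ∈ p₁.prod q₁, ⁅v, w⁆ ∈ p₂.prod q₂)
    (h₁ : ∀ v ∈ p₁, ∀ w ∈ p₁, ⁅v, w⁆ ∈ p₂) (h₂ : ∀ v ∈ q₁, ∀ w ∈ q₁, ⁅v, w⁆ ∈ q₂)
    (μ : Module.Dual ℝ p₂ × Module.Dual ℝ q₂) :
    formRank (kaplan (p₁.prod q₁) (p₂.prod q₂) h (p₂.prodDualEquiv q₂ μ)) =
      formRank (kaplan p₁ p₂ h₁ μ.1) + formRank (kaplan q₁ q₂ h₂ μ.2) :=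
  formRank_eq_add_of_linearEquiv_prod (p₁.prodEquiv q₁) fun _ _ => rfl

theorem metivierOrder_prod_of_ne_bot {p₁ p₂ : Submodule ℝ L₁} {q₁ q₂ : Submodule ℝ L₂}
    [FiniteDimensional ℝ p₁] [FiniteDimensional ℝ q₁] (hp₂ : p₂ ≠ ⊥) (hq₂ : q₂ ≠ ⊥)
    (h : ∀ v ∈ p₁.prod q₁, ∀ w ∈ p₁.prod q₁, ⁅v, w⁆ ∈ p₂.prod q₂)
    (h₁ : ∀ v ∈ p₁, ∀ w ∈ p₁, ⁅v, w⁆ ∈ p₂) (h₂ : ∀ v ∈ q₁, ∀ w ∈ q₁, ⁅v, w⁆ ∈ q₂) :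
    metivierOrder (p₁.prod q₁) (p₂.prod q₂) h =
      min (metivierOrder p₁ p₂ h₁) (metivierOrder q₁ q₂ h₂) := by
  have : Nontrivial p₂ := Submodule.nontrivial_iff_ne_bot.mpr hp₂
  have : Nontrivial q₂ := Submodule.nontrivial_iff_ne_bot.mpr hq₂
  have hreindex : {r | ∃ μ, μ ≠ 0 ∧ r = formRank (kaplan (p₁.prod q₁) (p₂.prod q₂) h μ)} =
      {r | ∃ μ : Module.Dual ℝ p₂ × Module.Dual ℝ q₂, μ ≠ 0 ∧
        r = formRank (kaplan p₁ p₂ h₁ μ.1) + formRank (kaplan q₁ q₂ h₂ μ.2)} := by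
    ext r
    constructor
    · rintro ⟨μ, hμ, rfl⟩
      refine ⟨(p₂.prodDualEquiv q₂).symm μ, by simpa using hμ, ?_⟩
      rw [← formRank_kaplan_prod, LinearEquiv.apply_symm_apply]
    · rintro ⟨μ, hμ, rfl⟩
      exact ⟨_, by simpa using hμ, (formRank_kaplan_prod h h₁ h₂ μ).symm⟩
  rw [metivierOrder, hreindex]
  exact Nat.sInf_ne_zero_add_eq_min (f := fun μ₁ => formRank (kaplan p₁ p₂ h₁ μ₁))
    (g := fun μ₂ => formRank (kaplan q₁ q₂ h₂ μ₂)) (by rw [kaplan_zero, formRank_zero])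
    (by rw [kaplan_zero, formRank_zero])

end Kaplan

/-- For non-abelian stratified real Lie algebras `𝔤₁`, `𝔤₂` of step 2,
the Métivier order of the product (with the product stratification) is the minimum of the
Métivier orders of the factors. -/
theorem metivierOrder_prod {L₁ L₂ : Type*} [LieRing L₁] [LieAlgebra ℝ L₁]
    [FiniteDimensional ℝ L₁] [LieRing L₂] [LieAlgebra ℝ L₂] [FiniteDimensional ℝ L₂]
    (V : ℕ → Submodule ℝ L₁) (W : ℕ → Submodule ℝ L₂)
    (hV : IsStratification L₁ V 2) (hW : IsStratification L₂ W 2) :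
    metivierOrder ((V 1).prod (W 1)) ((V 2).prod (W 2)) (prod_lie_mem_sq hV hW) =
      min (metivierOrder (V 1) (V 2) (hV.lie_mem_sq le_rfl))
        (metivierOrder (W 1) (W 2) (hW.lie_mem_sq le_rfl)) :=
  metivierOrder_prod_of_ne_bot hV.last_ne_bot hW.last_ne_bot _ _ _
end

section
/- For every integer m ≥ 4 and every integer s ≥ 1, there exists a finite-dimensional real Lie algebra 𝔤 together with a stratification 𝔤 = V₁ ⊕ ⋯ ⊕ V_s of step s with dim V₁ = m such that 𝔤 is hypergenerated (i.e. hypergenerated of order 1). -/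
/-- A witness for the existence of a finite-dimensional real stratified Lie algebra of
rank `m` and step `s` that is hypergenerated of order `k`. -/
structure HypergeneratedWitness (m s k : ℕ) where
  L : Type
  [instLieRing : LieRing L]
  [instLieAlgebra : LieAlgebra ℝ L]
  [instFiniteDimensional : FiniteDimensional ℝ L]
  V : ℕ → Submodule ℝ L
  strat : IsStratification L V s
  rank_eq : Module.finrank ℝ (V 1) = m
  hyper : IsHypergenerated L V k

/-!
The witness is the complex model filiform Lie algebra of step `s`, with generators `X, Y₀` and
`[X, Yₖ] = Yₖ₊₁`, regarded as a real Lie algebra, times an abelian `ℝ^(m - 4)` in the first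
stratum. Let `P` be a hyperplane of the first stratum `ℂX ⊕ ℂY₀ ⊕ ℝ^(m-4)`. Its projection
`K ⊆ ℂ²` has real dimension at least `3`, and on `ℂX ⊕ ℂY₀` the bracket is
`[aX + bY₀, a'X + b'Y₀] = (ab' - a'b) Y₁`. A real `3`-dimensional subspace of `ℂ²` meets its
image under multiplication by `i`, hence contains a complex line `ℂu`, and any `v ∈ K \ ℂu`
has `ab' - a'b ≠ 0` against `u`; so the brackets of `P` already fill the complex line `ℂY₁`.
The same determinant shows that some `p ∈ P` has a nonzero `X`-coefficient, and bracketing with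
`p` carries `ℂYₖ` onto `ℂYₖ₊₁`.
-/

open Module

theorem Submodule.finrank_map_add_finrank_inf_ker {K M N : Type*} [DivisionRing K]
    [AddCommGroup M] [Module K M] [AddCommGroup N] [Module K N] [FiniteDimensional K M]
    (f : M →ₗ[K] N) (P : Submodule K M) :
    finrank K (P.map f) + finrank K ↥(P ⊓ LinearMap.ker f) = finrank K P := by
  rw [← LinearMap.range_domRestrict, ← Submodule.map_comap_subtype,
    Submodule.finrank_map_subtype_eq, ← LinearMap.ker_domRestrict]
  exact LinearMap.finrank_range_add_finrank_ker _

theorem Submodule.finrank_add_finrank_map_le {K M N : Type*} [DivisionRing K]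
    [AddCommGroup M] [Module K M] [AddCommGroup N] [Module K N] [FiniteDimensional K M]
    (f : M →ₗ[K] N) {P V : Submodule K M} (hPV : P ≤ V) :
    finrank K P + finrank K (V.map f) ≤ finrank K (P.map f) + finrank K V := by
  have hP := Submodule.finrank_map_add_finrank_inf_ker f P
  have hV := Submodule.finrank_map_add_finrank_inf_ker f V
  have hker := Submodule.finrank_mono (inf_le_inf_right (LinearMap.ker f) hPV)
  omega

theorem smul_eq_smul_iff_eq_or_eq_zero {K M : Type*} [Field K] [AddCommGroup M] [Module K M]
    {c d : K} {z : M} : c • z = d • z ↔ c = d ∨ z = 0 := by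
  rw [← sub_eq_zero, ← sub_smul, smul_eq_zero, sub_eq_zero]

theorem LieDerivation.lie_mem_eigenspace_add {R L : Type*} [CommRing R] [LieRing L]
    [LieAlgebra R L] (D : LieDerivation R L L) {μ ν : R} {x y : L}
    (hx : x ∈ Module.End.eigenspace (D : Module.End R L) μ)
    (hy : y ∈ Module.End.eigenspace (D : Module.End R L) ν) :
    ⁅x, y⁆ ∈ Module.End.eigenspace (D : Module.End R L) (μ + ν) := by
  rw [Module.End.mem_eigenspace_iff] at *
  simp only [LieDerivation.coeFn_coe] at *
  rw [D.apply_lie_eq_add, hx, hy, lie_smul, smul_lie, add_smul, add_comm]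

section ComplexLines

variable {V : Type*} [AddCommGroup V] [Module ℂ V] [Module ℝ V] [IsScalarTower ℝ ℂ V]

theorem complex_smul_mem_span_pair_I_smul (a : ℂ) (u : V) :
    a • u ∈ Submodule.span ℝ {u, Complex.I • u} := by
  have h : a • u = a.re • u + a.im • (Complex.I • u) := by
    conv_lhs => rw [← Complex.re_add_im a]
    rw [add_smul, mul_smul, ← algebraMap_smul ℂ a.re u, ← algebraMap_smul ℂ a.im]
    rfl
  rw [h]
  exact add_mem (Submodule.smul_mem _ _ (Submodule.subset_span (by simp)))
    (Submodule.smul_mem _ _ (Submodule.subset_span (by simp)))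

theorem exists_ne_zero_mem_and_I_smul_mem [FiniteDimensional ℝ V] (K : Submodule ℝ V)
    (hK : finrank ℝ V < 2 * finrank ℝ K) : ∃ u ∈ K, u ≠ 0 ∧ Complex.I • u ∈ K := by
  let J : V ≃ₗ[ℝ] V :=
    (LinearEquiv.smulOfUnit (Units.mk0 Complex.I Complex.I_ne_zero)).restrictScalars ℝ
  have hJ : finrank ℝ (K.map (J : V →ₗ[ℝ] V)) = finrank ℝ K := LinearEquiv.finrank_map_eq J K
  have hdim := Submodule.finrank_sup_add_finrank_inf_eq K (K.map (J : V →ₗ[ℝ] V))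
  have hsup := Submodule.finrank_le (K ⊔ K.map (J : V →ₗ[ℝ] V))
  have hne : K ⊓ K.map (J : V →ₗ[ℝ] V) ≠ ⊥ := by
    intro h
    rw [h, finrank_bot] at hdim
    omega
  obtain ⟨_, ⟨huK, v, hvK, rfl⟩, hu0⟩ := Submodule.exists_mem_ne_zero_of_ne_bot hne
  refine ⟨J v, huK, hu0, ?_⟩
  change Complex.I • Complex.I • v ∈ K
  rw [smul_smul, Complex.I_mul_I, neg_one_smul]
  exact K.neg_mem hvK

end ComplexLines

theorem exists_smul_eq_of_mul_sub_mul_eq_zero {u v : ℂ × ℂ} (hu : u ≠ 0)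
    (h : u.1 * v.2 - v.1 * u.2 = 0) : ∃ a : ℂ, a • u = v := by
  by_cases h1 : u.1 = 0
  · have h2 : u.2 ≠ 0 := fun h2 => hu (Prod.ext h1 h2)
    refine ⟨v.2 / u.2, Prod.ext ?_ ?_⟩ <;> simp only [Prod.smul_fst, Prod.smul_snd, smul_eq_mul]
    · simp_all
    · field_simp
  · refine ⟨v.1 / u.1, Prod.ext ?_ ?_⟩ <;> simp only [Prod.smul_fst, Prod.smul_snd, smul_eq_mul]
    · field_simp
    · field_simp
      linear_combination -h

theorem exists_mem_mul_sub_mul_eq {K : Submodule ℝ (ℂ × ℂ)} (hK : 3 ≤ finrank ℝ K) (c : ℂ) :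
    ∃ u ∈ K, ∃ v ∈ K, u.1 * v.2 - v.1 * u.2 = c := by
  obtain ⟨u, huK, hu0, hIu⟩ := exists_ne_zero_mem_and_I_smul_mem K (by simp; omega)
  set L := Submodule.span ℝ {u, Complex.I • u}
  have hLK : L ≤ K := Submodule.span_le.2 (Set.insert_subset huK (Set.singleton_subset_iff.2 hIu))
  have hL : finrank ℝ L ≤ 2 := by
    have := finrank_span_finset_le_card (R := ℝ) ({u, Complex.I • u} : Finset (ℂ × ℂ))
    rw [Finset.coe_pair] at this
    exact this.trans Finset.card_le_two
  obtain ⟨v, hvK, hvL⟩ := SetLike.exists_of_lt (lt_of_le_of_ne hLK (by rintro rfl; omega))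
  have hδ : u.1 * v.2 - v.1 * u.2 ≠ 0 := fun h => by
    obtain ⟨a, rfl⟩ := exists_smul_eq_of_mul_sub_mul_eq_zero hu0 h
    exact hvL (complex_smul_mem_span_pair_I_smul a u)
  refine ⟨(c / (u.1 * v.2 - v.1 * u.2)) • u, hLK (complex_smul_mem_span_pair_I_smul _ u), v, hvK,
    ?_⟩
  simp only [Prod.smul_fst, Prod.smul_snd, smul_eq_mul]
  field_simp

/-- The real Lie algebra `ℂX ⊕ ℂY₀ ⊕ ⋯ ⊕ ℂYₙ ⊕ ℝ^t` with `[X, Yₖ] = Yₖ₊₁` (and `Yₙ₊₁ = 0`)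
as its only nonzero brackets: `a` is the `X`-coordinate, `w k` the `Yₖ`-coordinate. -/
@[ext] structure ComplexFiliform (n t : ℕ) where
  a : ℂ
  w : Fin (n + 1) → ℂ
  r : Fin t → ℝ

namespace ComplexFiliform

variable {n t : ℕ}

def equivProd : ComplexFiliform n t ≃ ℂ × (Fin (n + 1) → ℂ) × (Fin t → ℝ) where
  toFun x := (x.a, x.w, x.r)
  invFun p := ⟨p.1, p.2.1, p.2.2⟩

instance : AddCommGroup (ComplexFiliform n t) := equivProd.addCommGroup

noncomputable instance : Module ℝ (ComplexFiliform n t) := equivProd.module ℝ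

instance : FiniteDimensional ℝ (ComplexFiliform n t) :=
  (equivProd.linearEquiv ℝ).symm.finiteDimensional

@[simp] lemma zero_a : (0 : ComplexFiliform n t).a = 0 := rfl
@[simp] lemma zero_w : (0 : ComplexFiliform n t).w = 0 := rfl
@[simp] lemma zero_r : (0 : ComplexFiliform n t).r = 0 := rfl
@[simp] lemma add_a (x y : ComplexFiliform n t) : (x + y).a = x.a + y.a := rfl
@[simp] lemma add_w (x y : ComplexFiliform n t) : (x + y).w = x.w + y.w := rfl
@[simp] lemma add_r (x y : ComplexFiliform n t) : (x + y).r = x.r + y.r := rfl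
@[simp] lemma sub_a (x y : ComplexFiliform n t) : (x - y).a = x.a - y.a := rfl
@[simp] lemma sub_w (x y : ComplexFiliform n t) : (x - y).w = x.w - y.w := rfl
@[simp] lemma sub_r (x y : ComplexFiliform n t) : (x - y).r = x.r - y.r := rfl
@[simp] lemma smul_a (c : ℝ) (x : ComplexFiliform n t) : (c • x).a = c • x.a := rfl
@[simp] lemma smul_w (c : ℝ) (x : ComplexFiliform n t) : (c • x).w = c • x.w := rfl
@[simp] lemma smul_r (c : ℝ) (x : ComplexFiliform n t) : (c • x).r = c • x.r := rfl

@[simp] lemma sum_a {ι : Type*} (s : Finset ι) (f : ι → ComplexFiliform n t) :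
    (∑ i ∈ s, f i).a = ∑ i ∈ s, (f i).a :=
  map_sum (AddMonoidHom.mk' a add_a) f s

@[simp] lemma sum_w {ι : Type*} (s : Finset ι) (f : ι → ComplexFiliform n t) :
    (∑ i ∈ s, f i).w = ∑ i ∈ s, (f i).w :=
  map_sum (AddMonoidHom.mk' w add_w) f s

@[simp] lemma sum_r {ι : Type*} (s : Finset ι) (f : ι → ComplexFiliform n t) :
    (∑ i ∈ s, f i).r = ∑ i ∈ s, (f i).r :=
  map_sum (AddMonoidHom.mk' r add_r) f s

def shift : (Fin (n + 1) → ℂ) →ₗ[ℂ] Fin (n + 1) → ℂ where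
  toFun w := Fin.cons 0 (Fin.init w)
  map_add' v w := by ext i; cases i using Fin.cases <;> simp [Fin.init]
  map_smul' c w := by ext i; cases i using Fin.cases <;> simp [Fin.init]

@[simp] lemma shift_apply_zero (w : Fin (n + 1) → ℂ) : shift w 0 = 0 := rfl

@[simp] lemma shift_apply_succ (w : Fin (n + 1) → ℂ) (j : Fin n) :
    shift w j.succ = w j.castSucc :=
  rfl

instance : Bracket (ComplexFiliform n t) (ComplexFiliform n t) :=
  ⟨fun x y => ⟨0, shift (x.a • y.w - y.a • x.w), 0⟩⟩

@[simp] lemma lie_a (x y : ComplexFiliform n t) : ⁅x, y⁆.a = 0 := rfl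
@[simp] lemma lie_w (x y : ComplexFiliform n t) : ⁅x, y⁆.w = shift (x.a • y.w - y.a • x.w) := rfl
@[simp] lemma lie_r (x y : ComplexFiliform n t) : ⁅x, y⁆.r = 0 := rfl

instance : LieRing (ComplexFiliform n t) where
  add_lie x y z := by ext <;> simp [add_smul]; abel
  lie_add x y z := by ext <;> simp [add_smul]; abel
  lie_self x := by ext <;> simp
  leibniz_lie x y z := by ext <;> simp [smul_sub, smul_smul, mul_comm]

noncomputable instance : LieAlgebra ℝ (ComplexFiliform n t) where
  lie_smul c x y := by ext <;> simp [smul_sub]; ring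

noncomputable def grading (n t : ℕ) :
    LieDerivation ℝ (ComplexFiliform n t) (ComplexFiliform n t) where
  toFun x := ⟨x.a, fun j => ((j : ℝ) + 1) • x.w j, x.r⟩
  map_add' x y := by ext <;> simp [smul_add]
  map_smul' c x := by ext <;> simp; ring
  leibniz' x y := by
    ext j
    · simp
    · cases j using Fin.cases
      · simp
      · simp; ring
    · simp

@[simp] lemma grading_apply (x : ComplexFiliform n t) :
    grading n t x = ⟨x.a, fun j => ((j : ℝ) + 1) • x.w j, x.r⟩ := rfl

/-- Taking eigenspaces of a derivation makes the strata independent and graded for free. -/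
noncomputable def stratum (n t i : ℕ) : Submodule ℝ (ComplexFiliform n t) :=
  Module.End.eigenspace (grading n t : Module.End ℝ (ComplexFiliform n t)) i

theorem mem_stratum_iff {i : ℕ} {x : ComplexFiliform n t} :
    x ∈ stratum n t i ↔
      (i ≠ 1 → x.a = 0 ∧ x.r = 0) ∧ ∀ j : Fin (n + 1), (j : ℕ) + 1 ≠ i → x.w j = 0 := by
  have ha : x.a = (i : ℝ) • x.a ↔ 1 = i ∨ x.a = 0 := by
    simpa [eq_comm] using smul_eq_smul_iff_eq_or_eq_zero (c := (1 : ℝ)) (d := i) (z := x.a)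
  have hr : x.r = (i : ℝ) • x.r ↔ 1 = i ∨ x.r = 0 := by
    simpa [eq_comm] using smul_eq_smul_iff_eq_or_eq_zero (c := (1 : ℝ)) (d := i) (z := x.r)
  have hw (j : Fin (n + 1)) :
      ((j : ℝ) + 1) • x.w j = (i : ℝ) • x.w j ↔ (j : ℕ) + 1 = i ∨ x.w j = 0 := by
    rw [smul_eq_smul_iff_eq_or_eq_zero]
    norm_cast
  simp only [stratum, Module.End.mem_eigenspace_iff, LieDerivation.coeFn_coe, grading_apply,
    ComplexFiliform.ext_iff, smul_a, smul_r, smul_w]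
  rw [ha, hr, funext_iff]
  simp only [Pi.smul_apply, hw]
  grind

theorem stratum_eq_bot {i : ℕ} (hi : i = 0 ∨ n + 1 < i) : stratum n t i = ⊥ := by
  refine eq_bot_iff.2 fun x hx => ?_
  rw [mem_stratum_iff] at hx
  obtain ⟨ha, hr⟩ := hx.1 (by omega)
  ext j
  · exact ha
  · exact hx.2 j (by omega)
  · exact congrFun hr j

theorem bracketSpan_stratum_le (i j : ℕ) :
    bracketSpan (stratum n t i) (stratum n t j) ≤ stratum n t (i + j) := by
  refine Submodule.span_le.2 ?_
  rintro _ ⟨x, hx, y, hy, rfl⟩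
  rw [SetLike.mem_coe, stratum, Nat.cast_add]
  exact (grading n t).lie_mem_eigenspace_add hx hy

/-- The element `c Yₖ` (zero when `k > n`). -/
def single (k : ℕ) (c : ℂ) : ComplexFiliform n t :=
  ⟨0, fun j => if (j : ℕ) = k then c else 0, 0⟩

@[simp] lemma single_zero (k : ℕ) : (single k 0 : ComplexFiliform n t) = 0 := by
  ext <;> simp [single]

theorem single_mem_stratum (k : ℕ) (c : ℂ) :
    (single k c : ComplexFiliform n t) ∈ stratum n t (k + 1) := by
  rw [mem_stratum_iff]
  refine ⟨fun _ => ⟨rfl, rfl⟩, fun j hj => ?_⟩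
  simp [single]
  omega

theorem mk_mem_stratum_one (a : ℂ) (r : Fin t → ℝ) :
    (⟨a, 0, r⟩ : ComplexFiliform n t) ∈ stratum n t 1 := by
  simp [mem_stratum_iff]

theorem eq_add_sum_single (x : ComplexFiliform n t) :
    x = ⟨x.a, 0, x.r⟩ + ∑ j : Fin (n + 1), single j (x.w j) := by
  ext i <;> simp [single, Finset.sum_apply, Fin.val_inj]

theorem exists_eq_single_of_mem_stratum {k : ℕ} {x : ComplexFiliform n t}
    (hx : x ∈ stratum n t (k + 2)) : ∃ c, x = single (k + 1) c := by
  rw [mem_stratum_iff] at hx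
  obtain ⟨ha, hr⟩ := hx.1 (by omega)
  by_cases hk : k + 1 < n + 1
  · refine ⟨x.w ⟨k + 1, hk⟩, ?_⟩
    ext j
    · exact ha
    · by_cases hj : (j : ℕ) = k + 1
      · simp [single, show j = ⟨k + 1, hk⟩ from Fin.ext hj]
      · simp [single, hj, hx.2 j (by omega)]
    · exact congrFun hr _
  · refine ⟨0, ?_⟩
    ext j
    · exact ha
    · simp [hx.2 j (by omega)]
    · exact congrFun hr _

theorem lie_single (x : ComplexFiliform n t) (k : ℕ) (c : ℂ) :
    ⁅x, (single k c : ComplexFiliform n t)⁆ = single (k + 1) (x.a * c) := by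
  ext j
  · rfl
  · cases j using Fin.cases <;> simp [single]
  · rfl

theorem lie_eq_single_one_of_mem_stratum_one {x y : ComplexFiliform n t}
    (hx : x ∈ stratum n t 1) (hy : y ∈ stratum n t 1) :
    ⁅x, y⁆ = single 1 (x.a * y.w 0 - y.a * x.w 0) := by
  rw [mem_stratum_iff] at hx hy
  ext j
  · rfl
  · cases j using Fin.cases with
    | zero => simp [single]
    | succ j =>
      by_cases hj : (j : ℕ) = 0
      · have : j.castSucc = 0 := Fin.ext hj
        simp [single, hj, this]
      · simp [single, hj, hx.2 j.castSucc (by simpa), hy.2 j.castSucc (by simpa)]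
  · rfl

theorem isInternal_stratum :
    DirectSum.IsInternal (fun i : Fin (n + 1) => stratum n t (i.1 + 1)) := by
  rw [DirectSum.isInternal_submodule_iff_iSupIndep_and_iSup_eq_top]
  constructor
  · have hinj : Function.Injective (fun i : Fin (n + 1) => ((i.1 + 1 : ℕ) : ℝ)) := by
      intro i j h
      simp only [Nat.cast_inj, add_left_inj] at h
      exact Fin.ext h
    exact (Module.End.eigenspaces_iSupIndep _).comp hinj
  · refine eq_top_iff.2 fun x _ => ?_
    rw [eq_add_sum_single x]
    exact add_mem (Submodule.mem_iSup_of_mem 0 (mk_mem_stratum_one _ _))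
      (sum_mem fun j _ => Submodule.mem_iSup_of_mem j (single_mem_stratum _ _))

theorem isStratification : IsStratification (ComplexFiliform n t) (stratum n t) (n + 1) where
  one_le_step := by omega
  isInternal := isInternal_stratum
  bracket_eq i h2 hi := by
    obtain ⟨k, rfl⟩ : ∃ k, i = k + 2 := ⟨i - 2, by omega⟩
    refine le_antisymm ((bracketSpan_stratum_le 1 (k + 1)).trans_eq (by ring_nf)) fun x hx => ?_
    obtain ⟨c, rfl⟩ := exists_eq_single_of_mem_stratum hx
    refine Submodule.subset_span ⟨⟨1, 0, 0⟩, mk_mem_stratum_one _ _, single k c,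
      single_mem_stratum k c, ?_⟩
    rw [lie_single, one_mul]
  last_ne_bot := by
    refine (Submodule.ne_bot_iff _).2 ⟨single n 1, single_mem_stratum n 1, fun h => ?_⟩
    simpa [single] using congrArg (fun x : ComplexFiliform n t => x.w (Fin.last n)) h
  bracket_last_eq_bot :=
    eq_bot_iff.2 ((bracketSpan_stratum_le 1 (n + 1)).trans (stratum_eq_bot (by omega)).le)
  zero_eq_bot := stratum_eq_bot (Or.inl rfl)
  eq_bot_of_gt _ hi := stratum_eq_bot (Or.inr hi)

noncomputable def inclStratumOne : ℂ × ℂ × (Fin t → ℝ) →ₗ[ℝ] ComplexFiliform n t where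
  toFun p := ⟨p.1, 0, p.2.2⟩ + single 0 p.2.1
  map_add' p q := by ext j <;> simp [single]; split_ifs <;> simp
  map_smul' c p := by ext j <;> simp [single]

theorem inclStratumOne_injective : Function.Injective (inclStratumOne (n := n) (t := t)) := by
  intro p q h
  have ha := congrArg a h
  have hw := congrFun (congrArg w h) 0
  have hr := congrArg r h
  simp [inclStratumOne, single] at ha hw hr
  exact Prod.ext ha (Prod.ext hw hr)

theorem range_inclStratumOne :
    LinearMap.range (inclStratumOne (n := n) (t := t)) = stratum n t 1 := by
  refine le_antisymm ?_ fun x hx => ⟨(x.a, x.w 0, x.r), ?_⟩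
  · rintro _ ⟨p, rfl⟩
    exact add_mem (mk_mem_stratum_one _ _) (single_mem_stratum 0 _)
  · rw [mem_stratum_iff] at hx
    ext j
    · simp [inclStratumOne, single]
    · by_cases hj : j = 0
      · simp [inclStratumOne, single, hj]
      · have hj' : (j : ℕ) + 1 ≠ 1 := by have := Fin.val_ne_zero_iff.2 hj; omega
        simp [inclStratumOne, single, hj, hx.2 j hj']
    · simp [inclStratumOne, single]

theorem finrank_stratum_one : finrank ℝ (stratum n t 1) = 4 + t := by
  rw [← range_inclStratumOne, LinearMap.finrank_range_of_inj inclStratumOne_injective]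
  simp
  omega

noncomputable def pairProj : ComplexFiliform n t →ₗ[ℝ] ℂ × ℂ where
  toFun x := (x.a, x.w 0)
  map_add' _ _ := rfl
  map_smul' _ _ := rfl

@[simp] lemma pairProj_apply (x : ComplexFiliform n t) : pairProj x = (x.a, x.w 0) := rfl

theorem map_pairProj_stratum_one :
    (stratum n t 1).map (pairProj (n := n) (t := t)) = ⊤ := by
  refine eq_top_iff.2 fun p _ => ⟨inclStratumOne (p.1, p.2, 0), ?_, ?_⟩
  · rw [← range_inclStratumOne]
    exact LinearMap.mem_range_self _ _
  · simp [inclStratumOne, single]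

theorem three_le_finrank_map_pairProj {P : Submodule ℝ (ComplexFiliform n t)}
    (hPV : P ≤ stratum n t 1) (hP : finrank ℝ P = finrank ℝ (stratum n t 1) - 1) :
    3 ≤ finrank ℝ (P.map pairProj) := by
  have h := Submodule.finrank_add_finrank_map_le pairProj hPV
  rw [map_pairProj_stratum_one, finrank_top, finrank_stratum_one] at h
  rw [finrank_stratum_one] at hP
  simp at h
  omega

theorem commutatorSubmodule_le_of_single_mem {S : Submodule ℝ (ComplexFiliform n t)}
    (h : ∀ k c, single (k + 1) c ∈ S) : commutatorSubmodule (ComplexFiliform n t) ≤ S := by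
  refine Submodule.span_le.2 ?_
  rintro _ ⟨x, -, y, -, rfl⟩
  rw [SetLike.mem_coe, eq_add_sum_single ⁅x, y⁆]
  refine add_mem S.zero_mem (sum_mem fun j _ => ?_)
  cases j using Fin.cases with
  | zero => simp
  | succ j => exact h j _

theorem single_mem_lieSpan {P : Submodule ℝ (ComplexFiliform n t)} (hPV : P ≤ stratum n t 1)
    (hP : 3 ≤ finrank ℝ (P.map pairProj)) (k : ℕ) (c : ℂ) :
    single (k + 1) c ∈ LieSubalgebra.lieSpan ℝ (ComplexFiliform n t) P := by
  set Q := LieSubalgebra.lieSpan ℝ (ComplexFiliform n t) P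
  obtain ⟨p, hp, hpa⟩ : ∃ p ∈ P, p.a ≠ 0 := by
    obtain ⟨_, ⟨x, hx, rfl⟩, _, ⟨y, hy, rfl⟩, h⟩ := exists_mem_mul_sub_mul_eq hP 1
    by_contra! h0
    simp [h0 x hx, h0 y hy] at h
  induction k generalizing c with
  | zero =>
    obtain ⟨_, ⟨x, hx, rfl⟩, _, ⟨y, hy, rfl⟩, h⟩ := exists_mem_mul_sub_mul_eq hP c
    have hxy := Q.lie_mem (LieSubalgebra.subset_lieSpan hx) (LieSubalgebra.subset_lieSpan hy)
    rw [pairProj_apply, pairProj_apply] at h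
    rwa [lie_eq_single_one_of_mem_stratum_one (hPV hx) (hPV hy), h] at hxy
  | succ k ih =>
    have hpk := Q.lie_mem (LieSubalgebra.subset_lieSpan hp) (ih (c / p.a))
    rwa [lie_single, mul_div_cancel₀ _ hpa] at hpk

theorem isHypergenerated : IsHypergenerated (ComplexFiliform n t) (stratum n t) 1 :=
  fun _ hPV hP => commutatorSubmodule_le_of_single_mem
    (single_mem_lieSpan hPV (three_le_finrank_map_pairProj hPV hP))

end ComplexFiliform

/-- For every `m ≥ 4` and `s ≥ 1` there exists a finite-dimensional real
Lie algebra with a stratification of step `s` and rank `m` that is hypergenerated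
(i.e. hypergenerated of order 1). -/
theorem exists_hypergenerated (m s : ℕ) (hm : 4 ≤ m) (hs : 1 ≤ s) :
    Nonempty (HypergeneratedWitness m s 1) := by
  obtain ⟨t, rfl⟩ : ∃ t, m = 4 + t := ⟨m - 4, by omega⟩
  obtain ⟨n, rfl⟩ : ∃ n, s = n + 1 := ⟨s - 1, by omega⟩
  exact ⟨{ L := ComplexFiliform n t
           V := ComplexFiliform.stratum n t
           strat := ComplexFiliform.isStratification
           rank_eq := ComplexFiliform.finrank_stratum_one
           hyper := ComplexFiliform.isHypergenerated }⟩
end
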